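/- arXiv:1911.04811 — 12 statements merged into one kernel-verified Lean document; each statement's English description precedes it below -/
import Mathlib

section
/- Let H be a complex Hilbert space, A a commutative unital C*-subalgebra of B(H), and T ∈ B(H) an isometry. Then axioms (A1) and (A2) hold if and only if T*aT ∈ A for every a ∈ A and the map L : A → A, L(a) = T*aT, is a transfer operator for some unital endomorphism α of A. If, in addition, axiom (A3) holds, then L is faithful and the endomorphism α satisfying (A2) is unique. -/
/-! If `L a = T* a T` is a transfer operator for `α`, then `L (α a) = a` and
`L (α (a* a)) = a* a`; for `X = T a - α(a) T` these make `X* X` vanish, so `X = 0` by the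
C*-identity, which is (A2). Conversely (A2) gives `T* α(a) = a T*`, which is the transfer
identity. Under (A3) an element `d ∈ A` with `d T = 0` kills every `b T h` with `b ∈ A`
(as `d b = b d`), hence vanishes by density; faithfulness (`T* a* a T = 0` forces `a T = 0`)
and uniqueness of `α` (`(α₁ a - α₂ a) T = 0`) both reduce to this. -/

open ContinuousLinearMap MeasureTheory

structure IsTransferOperator {H : Type*} [NormedAddCommGroup H] [InnerProductSpace ℂ H]
    [CompleteSpace H] (A : StarSubalgebra ℂ (H →L[ℂ] H))
    (α : ↥A →⋆ₐ[ℂ] ↥A) (L : ↥A → ↥A) : Prop where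
  map_add : ∀ a b : ↥A, L (a + b) = L a + L b
  map_smul : ∀ (c : ℂ) (a : ↥A), L (c • a) = c • L a
  map_one : L 1 = 1
  positive : ∀ a : ↥A, ((a : H →L[ℂ] H)).IsPositive → ((L a : ↥A) : H →L[ℂ] H).IsPositive
  transfer : ∀ a b : ↥A, L (α a * b) = a * L b

theorem CStarRing.mul_eq_mul_of_star_mul_self_conj {R : Type*} [NormedRing R] [StarRing R]
    [CStarRing R] {T a c : R} (hT : star T * T = 1) (hc : star T * c * T = a)
    (hcc : star T * (star c * c) * T = star a * a) : T * a = c * T := by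
  have hc' : star T * star c * T = star a := by
    simpa [star_mul, mul_assoc] using congrArg star hc
  have hX : star (T * a - c * T) * (T * a - c * T) = 0 := by
    have expand : star (T * a - c * T) * (T * a - c * T) =
        star a * (star T * T) * a - star a * (star T * c * T) - star T * star c * T * a
          + star T * (star c * c) * T := by
      simp only [star_sub, star_mul]; noncomm_ring
    rw [expand, hT, hc, hc', hcc]; noncomm_ring
  exact sub_eq_zero.mp ((CStarRing.star_mul_self_eq_zero_iff _).mp hX)

theorem ContinuousLinearMap.eq_zero_of_commute_of_mul_eq_zero {𝕜 E : Type*} [RCLike 𝕜]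
    [NormedAddCommGroup E] [NormedSpace 𝕜 E] {S : Set (E →L[𝕜] E)} {T d : E →L[𝕜] E}
    (hdense : Dense (↑(Submodule.span 𝕜 {v : E | ∃ b ∈ S, ∃ h : E, v = b (T h)}) : Set E))
    (hcomm : ∀ b ∈ S, Commute d b) (hdT : d * T = 0) : d = 0 := by
  refine ContinuousLinearMap.ext_on hdense ?_
  rintro _ ⟨b, hb, h, rfl⟩
  calc d (b (T h)) = b ((d * T) h) := congrArg (· (T h)) (hcomm b hb).eq
    _ = 0 := by rw [hdT, zero_apply, map_zero]

section

variable {H : Type*} [NormedAddCommGroup H] [InnerProductSpace ℂ H] [CompleteSpace H]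
  {A : StarSubalgebra ℂ (H →L[ℂ] H)} {T : H →L[ℂ] H} {α : ↥A →⋆ₐ[ℂ] ↥A}

theorem adjoint_mul_map_eq_mul_adjoint
    (hα : ∀ a : ↥A, T * (a : H →L[ℂ] H) = (α a : H →L[ℂ] H) * T) (a : ↥A) :
    adjoint T * (α a : H →L[ℂ] H) = (a : H →L[ℂ] H) * adjoint T := by
  simpa [star_mul, ← star_eq_adjoint, map_star] using (congrArg star (hα (star a))).symm

theorem IsTransferOperator.of_intertwining (hT : adjoint T * T = 1)
    (hA1 : ∀ a ∈ A, adjoint T * a * T ∈ A)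
    (hα : ∀ a : ↥A, T * (a : H →L[ℂ] H) = (α a : H →L[ℂ] H) * T) :
    IsTransferOperator A α (fun a => ⟨adjoint T * a * T, hA1 a a.2⟩) where
  map_add a b := Subtype.ext <| by simp [mul_add, add_mul]
  map_smul c a := Subtype.ext <| by simp
  map_one := Subtype.ext <| by simpa using hT
  positive a ha := ha.adjoint_conj T
  transfer a b := Subtype.ext <| by
    simp only [MulMemClass.coe_mul, ← mul_assoc, adjoint_mul_map_eq_mul_adjoint hα]

theorem IsTransferOperator.intertwining {L : ↥A → ↥A} (hT : adjoint T * T = 1)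
    (hL : ∀ a : ↥A, (L a : H →L[ℂ] H) = adjoint T * a * T) (hTr : IsTransferOperator A α L)
    (a : ↥A) : T * (a : H →L[ℂ] H) = (α a : H →L[ℂ] H) * T := by
  have hLα : ∀ a : ↥A, adjoint T * (α a : H →L[ℂ] H) * T = a := fun a => by
    simpa [hTr.map_one, hL] using congrArg Subtype.val (hTr.transfer a 1)
  refine CStarRing.mul_eq_mul_of_star_mul_self_conj (by rwa [star_eq_adjoint]) ?_ ?_
  · rw [star_eq_adjoint, hLα]
  · simpa [star_eq_adjoint, map_star, map_mul] using hLα (star a * a)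

theorem StarSubalgebra.eq_zero_of_mul_eq_zero_of_dense
    (hcomm : ∀ a ∈ A, ∀ b ∈ A, a * b = b * a)
    (hdense : Dense (↑(Submodule.span ℂ {v : H | ∃ a ∈ A, ∃ h : H, v = a (T h)}) : Set H))
    {d : ↥A} (hdT : (d : H →L[ℂ] H) * T = 0) : d = 0 := by
  have hd : (d : H →L[ℂ] H) = 0 :=
    ContinuousLinearMap.eq_zero_of_commute_of_mul_eq_zero (S := (A : Set (H →L[ℂ] H))) hdense
      (fun b hb => hcomm _ d.2 _ hb) hdT
  exact Subtype.ext hd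

end

theorem stmt0_general {H : Type*} [NormedAddCommGroup H] [InnerProductSpace ℂ H] [CompleteSpace H]
    (A : StarSubalgebra ℂ (H →L[ℂ] H))
    (hcomm : ∀ a ∈ A, ∀ b ∈ A, a * b = b * a)
    (T : H →L[ℂ] H) (hT : adjoint T * T = 1) :
    (((∀ a ∈ A, adjoint T * a * T ∈ A) ∧
        (∃ α : ↥A →⋆ₐ[ℂ] ↥A, ∀ a : ↥A, T * (a : H →L[ℂ] H) = (α a : H →L[ℂ] H) * T)) ↔
      ((∀ a ∈ A, adjoint T * a * T ∈ A) ∧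
        ∃ (α : ↥A →⋆ₐ[ℂ] ↥A) (L : ↥A → ↥A),
          (∀ a : ↥A, ((L a : ↥A) : H →L[ℂ] H) = adjoint T * (a : H →L[ℂ] H) * T) ∧
          IsTransferOperator A α L)) ∧
    (((∀ a ∈ A, adjoint T * a * T ∈ A) ∧
        (∃ α : ↥A →⋆ₐ[ℂ] ↥A, ∀ a : ↥A, T * (a : H →L[ℂ] H) = (α a : H →L[ℂ] H) * T) ∧
        Dense (↑(Submodule.span ℂ {v : H | ∃ a ∈ A, ∃ h : H, v = a (T h)}) : Set H)) →
      ((∀ a : ↥A,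
          adjoint T * (star (a : H →L[ℂ] H) * (a : H →L[ℂ] H)) * T = 0 → a = 0) ∧
        (∀ α₁ α₂ : ↥A →⋆ₐ[ℂ] ↥A,
          (∀ a : ↥A, T * (a : H →L[ℂ] H) = (α₁ a : H →L[ℂ] H) * T) →
          (∀ a : ↥A, T * (a : H →L[ℂ] H) = (α₂ a : H →L[ℂ] H) * T) → α₁ = α₂))) := by
  refine ⟨⟨?_, ?_⟩, ?_⟩
  · rintro ⟨hA1, α, hα⟩
    exact ⟨hA1, α, _, fun _ => rfl, .of_intertwining hT hA1 hα⟩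
  · rintro ⟨hA1, α, L, hL, hTr⟩
    exact ⟨hA1, α, hTr.intertwining hT hL⟩
  · rintro ⟨-, -, hdense⟩
    refine ⟨fun a ha => ?_, fun α₁ α₂ h₁ h₂ => ?_⟩
    · refine StarSubalgebra.eq_zero_of_mul_eq_zero_of_dense hcomm hdense ?_
      rw [← CStarRing.star_mul_self_eq_zero_iff, star_mul, star_eq_adjoint T, ← ha]
      noncomm_ring
    · refine StarAlgHom.ext fun a => sub_eq_zero.mp <|
        StarSubalgebra.eq_zero_of_mul_eq_zero_of_dense hcomm hdense ?_
      rw [AddSubgroupClass.coe_sub, sub_mul, ← h₁, ← h₂, sub_self]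

/-- For an isometry `T` and a commutative unital C*-subalgebra `A ⊆ B(H)`,
axioms (A1) and (A2) hold iff `T*aT ∈ A` for all `a ∈ A` and `L a = T*aT` is a transfer
operator for some unital endomorphism `α` of `A`.  If moreover (A3) holds, then `L` is
faithful and the endomorphism in (A2) is unique. -/
theorem stmt0 {H : Type*} [NormedAddCommGroup H] [InnerProductSpace ℂ H] [CompleteSpace H]
    (A : StarSubalgebra ℂ (H →L[ℂ] H)) (hA : IsClosed (A : Set (H →L[ℂ] H)))
    (hcomm : ∀ a ∈ A, ∀ b ∈ A, a * b = b * a)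
    (T : H →L[ℂ] H) (hT : adjoint T * T = 1) :
    (((∀ a ∈ A, adjoint T * a * T ∈ A) ∧
        (∃ α : ↥A →⋆ₐ[ℂ] ↥A, ∀ a : ↥A, T * (a : H →L[ℂ] H) = (α a : H →L[ℂ] H) * T)) ↔
      ((∀ a ∈ A, adjoint T * a * T ∈ A) ∧
        ∃ (α : ↥A →⋆ₐ[ℂ] ↥A) (L : ↥A → ↥A),
          (∀ a : ↥A, ((L a : ↥A) : H →L[ℂ] H) = adjoint T * (a : H →L[ℂ] H) * T) ∧
          IsTransferOperator A α L)) ∧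
    (((∀ a ∈ A, adjoint T * a * T ∈ A) ∧
        (∃ α : ↥A →⋆ₐ[ℂ] ↥A, ∀ a : ↥A, T * (a : H →L[ℂ] H) = (α a : H →L[ℂ] H) * T) ∧
        Dense (↑(Submodule.span ℂ {v : H | ∃ a ∈ A, ∃ h : H, v = a (T h)}) : Set H)) →
      ((∀ a : ↥A,
          adjoint T * (star (a : H →L[ℂ] H) * (a : H →L[ℂ] H)) * T = 0 → a = 0) ∧
        (∀ α₁ α₂ : ↥A →⋆ₐ[ℂ] ↥A,
          (∀ a : ↥A, T * (a : H →L[ℂ] H) = (α₁ a : H →L[ℂ] H) * T) →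
          (∀ a : ↥A, T * (a : H →L[ℂ] H) = (α₂ a : H →L[ℂ] H) * T) → α₁ = α₂))) :=
  stmt0_general A hcomm T hT
end

section
/- Let H be a complex Hilbert space, A a commutative unital C*-subalgebra of B(H), and T ∈ B(H) an isometry satisfying axioms (A1) and (A2) with endomorphism α. The following are equivalent: (1) T is unitary; (2) aT is invertible in B(H) for some a ∈ A; (3) α is an automorphism of A (a bijective endomorphism) and axiom (A3) holds; (4) T is unitary and {T*aT : a ∈ A} = A. Consequently, if T is not invertible, then no operator aT with a ∈ A is invertible. -/
/-!
If `aT` is invertible then `a` is surjective; it is normal because `A` is commutative, so its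
kernel `(range a)ᗮ` vanishes and `a` is invertible. Hence `T = a⁻¹ (aT)` is a surjective
isometry, i.e. unitary. A unitary `T` makes `α` bijective with inverse `b ↦ T* b T`. Conversely,
when `α` is onto, every `a (T h) = T (α⁻¹ a h)` lies in the closed range of `T`, so (A3) forces
`T` to be onto.
-/

open ContinuousLinearMap

namespace ContinuousLinearMap

variable {𝕜 E : Type*} [RCLike 𝕜] [NormedAddCommGroup E] [InnerProductSpace 𝕜 E] [CompleteSpace E]

theorem IsStarNormal.bijective_of_surjective {a : E →L[𝕜] E} (ha : IsStarNormal a)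
    (hsurj : Function.Surjective a) : Function.Bijective a := by
  refine ⟨LinearMap.ker_eq_bot.mp ?_, hsurj⟩
  rw [← ha.orthogonal_range, LinearMap.range_eq_top.mpr hsurj, Submodule.top_orthogonal_eq_bot]

theorem leftInverse_adjoint_of_adjoint_mul_self {T : E →L[𝕜] E} (hT : adjoint T * T = 1) :
    Function.LeftInverse (adjoint T) T := fun x => by
  rw [← mul_apply_eq_comp, hT, one_apply_eq_self]

theorem mem_unitary_of_adjoint_mul_self_of_surjective {T : E →L[𝕜] E}
    (hT : adjoint T * T = 1) (hsurj : Function.Surjective T) : T ∈ unitary (E →L[𝕜] E) := by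
  refine Unitary.mem_iff.mpr ⟨by rwa [star_eq_adjoint], ext fun x => ?_⟩
  obtain ⟨y, rfl⟩ := hsurj x
  rw [star_eq_adjoint, mul_apply_eq_comp, leftInverse_adjoint_of_adjoint_mul_self hT y,
    one_apply_eq_self]

theorem isClosed_range_of_adjoint_mul_self {T : E →L[𝕜] E} (hT : adjoint T * T = 1) :
    IsClosed (Set.range T) :=
  (AddMonoidHomClass.isometry_of_norm T
    (T.norm_map_iff_adjoint_comp_self.mpr hT)).isClosedEmbedding.isClosed_range

end ContinuousLinearMap

section WeightedShift

variable {H : Type*} [NormedAddCommGroup H] [InnerProductSpace ℂ H] [CompleteSpace H]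
  {A : StarSubalgebra ℂ (H →L[ℂ] H)} {T : H →L[ℂ] H} {α : ↥A →⋆ₐ[ℂ] ↥A}

theorem surjective_of_isUnit_mul (hcomm : ∀ a ∈ A, ∀ b ∈ A, a * b = b * a) {a : ↥A}
    (ha : IsUnit ((a : H →L[ℂ] H) * T)) : Function.Surjective T := by
  have haT : Function.Surjective ((a : H →L[ℂ] H) ∘ T) := (isUnit_iff_bijective.mp ha).2
  have hnormal : IsStarNormal (a : H →L[ℂ] H) := ⟨hcomm _ (star_mem a.2) _ a.2⟩
  exact (Function.Surjective.of_comp_iff' (hnormal.bijective_of_surjective haT.of_comp) T).mp haT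

theorem bijective_of_mem_unitary (hT : adjoint T * T = 1)
    (hA1 : ∀ a ∈ A, adjoint T * a * T ∈ A)
    (hα : ∀ a : ↥A, T * (a : H →L[ℂ] H) = (α a : H →L[ℂ] H) * T)
    (hU : T ∈ unitary (H →L[ℂ] H)) : Function.Bijective α := by
  have hTT : T * adjoint T = 1 := star_eq_adjoint T ▸ Unitary.mul_star_self_of_mem hU
  refine ⟨fun x y hxy => Subtype.ext ?_, fun b => ⟨⟨adjoint T * b * T, hA1 _ b.2⟩, ?_⟩⟩
  · calc (x : H →L[ℂ] H) = adjoint T * (T * x) := by rw [← mul_assoc, hT, one_mul]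
      _ = adjoint T * (T * y) := by rw [hα, hα, hxy]
      _ = y := by rw [← mul_assoc, hT, one_mul]
  · have key := hα ⟨adjoint T * b * T, hA1 _ b.2⟩
    generalize α _ = c at key ⊢
    refine Subtype.ext ?_
    calc (c : H →L[ℂ] H) = c * T * adjoint T := by rw [mul_assoc, hTT, mul_one]
      _ = T * adjoint T * b * (T * adjoint T) := by rw [← key]; simp only [mul_assoc]
      _ = b := by rw [hTT, one_mul, mul_one]

variable (A T) in
def spanMulRange : Submodule ℂ H :=
  Submodule.span ℂ {v : H | ∃ a ∈ A, ∃ h : H, v = a (T h)}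

theorem spanMulRange_le_range
    (hα : ∀ a : ↥A, T * (a : H →L[ℂ] H) = (α a : H →L[ℂ] H) * T) (hsurj : Function.Surjective α) :
    spanMulRange A T ≤ LinearMap.range (T : H →ₗ[ℂ] H) := by
  refine Submodule.span_le.mpr ?_
  rintro _ ⟨a, haA, h, rfl⟩
  obtain ⟨b, hb⟩ := hsurj ⟨a, haA⟩
  refine ⟨(b : H →L[ℂ] H) h, ?_⟩
  change (T * b) h = a (T h)
  rw [hα, hb]
  rfl

theorem surjective_of_dense_spanMulRange (hT : adjoint T * T = 1)
    (hα : ∀ a : ↥A, T * (a : H →L[ℂ] H) = (α a : H →L[ℂ] H) * T) (hsurj : Function.Surjective α)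
    (hdense : Dense (spanMulRange A T : Set H)) : Function.Surjective T := by
  have hrange : Dense (Set.range T) := hdense.mono (spanMulRange_le_range hα hsurj)
  exact Set.range_eq_univ.mp <|
    (isClosed_range_of_adjoint_mul_self hT).closure_eq.symm.trans hrange.closure_eq

theorem dense_spanMulRange (hsurj : Function.Surjective T) :
    Dense (spanMulRange A T : Set H) := by
  have htop : spanMulRange A T = ⊤ := Submodule.eq_top_iff'.mpr fun v =>
    Submodule.subset_span (by obtain ⟨h, rfl⟩ := hsurj v; exact ⟨1, A.one_mem, h, rfl⟩)
  rw [htop, Submodule.top_coe]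
  exact dense_univ

theorem image_adjoint_conj_eq (hT : adjoint T * T = 1)
    (hA1 : ∀ a ∈ A, adjoint T * a * T ∈ A)
    (hα : ∀ a : ↥A, T * (a : H →L[ℂ] H) = (α a : H →L[ℂ] H) * T) :
    (fun b => adjoint T * b * T) '' (A : Set (H →L[ℂ] H)) = (A : Set (H →L[ℂ] H)) := by
  refine Set.Subset.antisymm (Set.image_subset_iff.mpr hA1) fun b hb => ?_
  refine ⟨α ⟨b, hb⟩, (α ⟨b, hb⟩).2, ?_⟩
  change adjoint T * (α ⟨b, hb⟩ : H →L[ℂ] H) * T = b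
  rw [mul_assoc, ← hα, ← mul_assoc, hT, one_mul]

end WeightedShift

theorem stmt1_general {H : Type*} [NormedAddCommGroup H] [InnerProductSpace ℂ H] [CompleteSpace H]
    (A : StarSubalgebra ℂ (H →L[ℂ] H))
    (hcomm : ∀ a ∈ A, ∀ b ∈ A, a * b = b * a)
    (T : H →L[ℂ] H) (hT : adjoint T * T = 1)
    (hA1 : ∀ a ∈ A, adjoint T * a * T ∈ A)
    (α : ↥A →⋆ₐ[ℂ] ↥A)
    (hα : ∀ a : ↥A, T * (a : H →L[ℂ] H) = (α a : H →L[ℂ] H) * T) :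
    ((T ∈ unitary (H →L[ℂ] H)) ↔ (∃ a : ↥A, IsUnit ((a : H →L[ℂ] H) * T))) ∧
    ((T ∈ unitary (H →L[ℂ] H)) ↔
      (Function.Bijective α ∧
        Dense (↑(Submodule.span ℂ {v : H | ∃ a ∈ A, ∃ h : H, v = a (T h)}) : Set H))) ∧
    ((T ∈ unitary (H →L[ℂ] H)) ↔
      (T ∈ unitary (H →L[ℂ] H) ∧
        (fun b => adjoint T * b * T) '' (A : Set (H →L[ℂ] H)) = (A : Set (H →L[ℂ] H)))) ∧
    (¬ IsUnit T → ∀ a : ↥A, ¬ IsUnit ((a : H →L[ℂ] H) * T)) := by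
  have isUnit_of_mem_unitary : T ∈ unitary (H →L[ℂ] H) → IsUnit T := fun hU =>
    Unitary.isUnit_coe (U := ⟨T, hU⟩)
  have unitary_of_isUnit_mul : (∃ a : ↥A, IsUnit ((a : H →L[ℂ] H) * T)) →
      T ∈ unitary (H →L[ℂ] H) := fun ⟨a, ha⟩ =>
    mem_unitary_of_adjoint_mul_self_of_surjective hT (surjective_of_isUnit_mul hcomm ha)
  refine ⟨⟨fun hU => ⟨1, by simpa using isUnit_of_mem_unitary hU⟩, unitary_of_isUnit_mul⟩,
    ⟨fun hU => ⟨bijective_of_mem_unitary hT hA1 hα hU,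
      dense_spanMulRange (isUnit_iff_bijective.mp (isUnit_of_mem_unitary hU)).2⟩,
      fun ⟨hbij, hdense⟩ => mem_unitary_of_adjoint_mul_self_of_surjective hT
        (surjective_of_dense_spanMulRange hT hα hbij.2 hdense)⟩,
    ⟨fun hU => ⟨hU, image_adjoint_conj_eq hT hA1 hα⟩, And.left⟩,
    fun hnT a ha => hnT (isUnit_of_mem_unitary (unitary_of_isUnit_mul ⟨a, ha⟩))⟩

/-- for well behaved abstract weighted shifts, the following are
equivalent: (1) `T` is unitary; (2) some `aT` with `a ∈ A` is invertible;
(3) the endomorphism `α` from (A2) is an automorphism and (A3) holds;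
(4) `T` is unitary and `T*AT = A`.  Consequently, if `T` is not invertible,
then no `aT` is invertible. -/
theorem stmt1 {H : Type*} [NormedAddCommGroup H] [InnerProductSpace ℂ H] [CompleteSpace H]
    (A : StarSubalgebra ℂ (H →L[ℂ] H)) (hA : IsClosed (A : Set (H →L[ℂ] H)))
    (hcomm : ∀ a ∈ A, ∀ b ∈ A, a * b = b * a)
    (T : H →L[ℂ] H) (hT : adjoint T * T = 1)
    (hA1 : ∀ a ∈ A, adjoint T * a * T ∈ A)
    (α : ↥A →⋆ₐ[ℂ] ↥A)
    (hα : ∀ a : ↥A, T * (a : H →L[ℂ] H) = (α a : H →L[ℂ] H) * T) :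
    ((T ∈ unitary (H →L[ℂ] H)) ↔ (∃ a : ↥A, IsUnit ((a : H →L[ℂ] H) * T))) ∧
    ((T ∈ unitary (H →L[ℂ] H)) ↔
      (Function.Bijective α ∧
        Dense (↑(Submodule.span ℂ {v : H | ∃ a ∈ A, ∃ h : H, v = a (T h)}) : Set H))) ∧
    ((T ∈ unitary (H →L[ℂ] H)) ↔
      (T ∈ unitary (H →L[ℂ] H) ∧
        (fun b => adjoint T * b * T) '' (A : Set (H →L[ℂ] H)) = (A : Set (H →L[ℂ] H)))) ∧
    (¬ IsUnit T → ∀ a : ↥A, ¬ IsUnit ((a : H →L[ℂ] H) * T)) :=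
  stmt1_general A hcomm T hT hA1 α hα
end

section
/- Let H be a complex Hilbert space, A a commutative unital C*-subalgebra of B(H), and T ∈ B(H) an isometry satisfying (A1) and (A2), with transfer operator L(a) = T*aT and endomorphism α. Suppose L is of finite type, i.e., it admits a quasi-basis. Then the following are equivalent: (1) axiom (A3) holds; (2) every quasi-basis u₁,…,u_N ∈ A for L satisfies ∑ᵢ uᵢTT*uᵢ* = 1; (3) some quasi-basis u₁,…,u_N ∈ A for L satisfies ∑ᵢ uᵢTT*uᵢ* = 1. -/
open ContinuousLinearMap MeasureTheory

/-- for abstract weighted shifts whose transfer operator `L a = T*aT` is of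
finite type (admits a quasi-basis), axiom (A3) is equivalent to the identity
`∑ᵢ uᵢ T T* uᵢ* = 1` holding for every (equivalently, some) quasi-basis `u₁,…,u_N` for `L`. -/
theorem stmt2 {H : Type*} [NormedAddCommGroup H] [InnerProductSpace ℂ H] [CompleteSpace H]
    (A : StarSubalgebra ℂ (H →L[ℂ] H)) (hA : IsClosed (A : Set (H →L[ℂ] H)))
    (hcomm : ∀ a ∈ A, ∀ b ∈ A, a * b = b * a)
    (T : H →L[ℂ] H) (hT : adjoint T * T = 1)
    (hA1 : ∀ a ∈ A, adjoint T * a * T ∈ A)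
    (α : ↥A →⋆ₐ[ℂ] ↥A)
    (hα : ∀ a : ↥A, T * (a : H →L[ℂ] H) = (α a : H →L[ℂ] H) * T)
    (L : ↥A → ↥A)
    (hL : ∀ a : ↥A, ((L a : ↥A) : H →L[ℂ] H) = adjoint T * (a : H →L[ℂ] H) * T)
    (hfin : ∃ (N : ℕ) (u : Fin N → ↥A), ∀ a : ↥A, a = ∑ i, u i * α (L (star (u i) * a))) :
    List.TFAE [
      Dense (↑(Submodule.span ℂ {v : H | ∃ a ∈ A, ∃ h : H, v = a (T h)}) : Set H),
      ∀ (N : ℕ) (u : Fin N → ↥A), (∀ a : ↥A, a = ∑ i, u i * α (L (star (u i) * a))) →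
        ∑ i, (u i : H →L[ℂ] H) * (T * adjoint T) * star ((u i : ↥A) : H →L[ℂ] H) = 1,
      ∃ (N : ℕ) (u : Fin N → ↥A), (∀ a : ↥A, a = ∑ i, u i * α (L (star (u i) * a))) ∧
        ∑ i, (u i : H →L[ℂ] H) * (T * adjoint T) * star ((u i : ↥A) : H →L[ℂ] H) = 1 ] := by
  set S : Set H := {v : H | ∃ a ∈ A, ∃ h : H, v = a (T h)} with hS
  tfae_have 1 → 2 := by
    intro hdense N u hu
    set Q : H →L[ℂ] H :=
      ∑ i, (u i : H →L[ℂ] H) * (T * adjoint T) * star ((u i : ↥A) : H →L[ℂ] H) with hQ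
    have key : ∀ a : ↥A, Q * ((a : H →L[ℂ] H) * T) = (a : H →L[ℂ] H) * T := by
      intro a
      have term : ∀ i, (u i : H →L[ℂ] H) * (T * adjoint T) * star ((u i : ↥A) : H →L[ℂ] H)
          * ((a : H →L[ℂ] H) * T)
          = ((u i * α (L (star (u i) * a)) : ↥A) : H →L[ℂ] H) * T := by
        intro i
        have h1 : ((α (L (star (u i) * a)) : ↥A) : H →L[ℂ] H) * T
            = T * ((L (star (u i) * a) : ↥A) : H →L[ℂ] H) := (hα _).symm
        push_cast
        conv_rhs => rw [mul_assoc, h1, hL]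
        push_cast
        simp [mul_assoc]
      calc Q * ((a : H →L[ℂ] H) * T)
          = ∑ i, (u i : H →L[ℂ] H) * (T * adjoint T) * star ((u i : ↥A) : H →L[ℂ] H)
            * ((a : H →L[ℂ] H) * T) := by rw [hQ, Finset.sum_mul]
        _ = ∑ i, ((u i * α (L (star (u i) * a)) : ↥A) : H →L[ℂ] H) * T := by
            exact Finset.sum_congr rfl fun i _ => term i
        _ = ((∑ i, u i * α (L (star (u i) * a)) : ↥A) : H →L[ℂ] H) * T := by
            rw [← Finset.sum_mul]; push_cast; ring
        _ = (a : H →L[ℂ] H) * T := by rw [← hu a]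
    have hQ1 : Q = 1 := by
      refine ContinuousLinearMap.ext_on hdense ?_
      rintro v ⟨a, ha, h, rfl⟩
      have := congrArg (fun f : H →L[ℂ] H => f h) (key ⟨a, ha⟩)
      simpa [mul_apply] using this
    exact hQ1
  tfae_have 2 → 3 := by
    intro h2
    obtain ⟨N, u, hu⟩ := hfin
    exact ⟨N, u, hu, h2 N u hu⟩
  tfae_have 3 → 1 := by
    intro ⟨N, u, hu, hQ⟩
    have hspan : Submodule.span ℂ S = ⊤ := by
      rw [Submodule.eq_top_iff']
      intro h
      have : h = ∑ i, (u i : H →L[ℂ] H) (T (adjoint T ((star ((u i : ↥A) : H →L[ℂ] H)) h))) := by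
        conv_lhs => rw [show h = (1 : H →L[ℂ] H) h from rfl, ← hQ]
        simp [ContinuousLinearMap.sum_apply, mul_apply]
      rw [this]
      exact Submodule.sum_mem _ fun i _ => Submodule.subset_span
        ⟨(u i : H →L[ℂ] H), (u i).2, _, rfl⟩
    rw [hspan]
    simp [dense_iff_closure_eq]
  tfae_finish
end

section
/- Let X be a compact Hausdorff space and φ : X → X a continuous surjection, and let α_φ : C(X) → C(X) be the endomorphism α_φ(a) = a ∘ φ. Then α_φ is of finite type — that is, there exist a transfer operator L for α_φ and a finite family u₁,…,u_N ∈ C(X) with a = ∑ᵢ uᵢ·α_φ(L(uᵢ*·a)) for all a ∈ C(X) — if and only if φ is a local homeomorphism. -/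
/-!
Let `L` be a transfer operator for `α_φ` with quasi-basis `u`, and put `M = ∑ ‖uᵢ‖²`. Positivity
and `L (g ∘ φ * f) = g * L f` force `L f y` to depend only on `f` restricted to the fibre
`φ⁻¹{y}`. Evaluating the reconstruction formula on a bump function at a point of that fibre
shows that each fibre point carries mass at least `1 / M` for the state `f ↦ L f y`, whose
total mass is 1. So fibres are finite and `φ` is open. The continuous kernel
`k(p, q) = ∑ uᵢ(p) conj uᵢ(q)` vanishes at distinct points of a fibre and not on the diagonal,
so `φ` is also locally injective.

Conversely, for a surjective local homeomorphism, the fibre average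
`L f y = (#φ⁻¹{y})⁻¹ ∑_{φ x = y} f x` is a transfer operator. Its continuity comes from writing
the fibre sum, via a partition of unity `ρᵢ` subordinate to finitely many charts, as a finite sum
of pushforwards along the inverse charts. The functions `uᵢ = √(ρᵢ · #φ⁻¹{φ ·})` form a
quasi-basis, because `√ρᵢ(x) √ρᵢ(z) = 0` for distinct points `x`, `z` of a fibre.
-/

open scoped ComplexOrder

/-- `L` is a (unital, positive) transfer operator for the endomorphism
`a ↦ a ∘ φ` of `C(X, ℂ)`. -/
def IsTransferOpC {X : Type*} [TopologicalSpace X] (φ : C(X, X))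
    (L : C(X, ℂ) →ₗ[ℂ] C(X, ℂ)) : Prop :=
  L 1 = 1 ∧ (∀ f : C(X, ℂ), (∀ x, 0 ≤ f x) → ∀ x, 0 ≤ (L f) x) ∧
    ∀ f g : C(X, ℂ), L (f.comp φ * g) = f * L g

open Set

lemma exists_complex_urysohn {X : Type*} [TopologicalSpace X] [NormalSpace X] [T1Space X]
    {s : Set X} (hs : IsClosed s) {x : X} (hx : x ∉ s) :
    ∃ a : C(X, ℂ), a x = 1 ∧ EqOn a 0 s ∧ 0 ≤ a ∧ a ≤ 1 := by
  obtain ⟨f, hf0, hf1, hf01⟩ := exists_continuous_zero_one_of_isClosed hs isClosed_singleton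
    (disjoint_singleton_right.2 hx)
  refine ⟨⟨fun z => (f z : ℂ), by fun_prop⟩, by simpa using hf1 rfl,
    fun z hz => by simpa using hf0 hz, ContinuousMap.le_def.2 fun z => ?_,
    ContinuousMap.le_def.2 fun z => ?_⟩
  · simpa using Complex.real_le_real.2 (hf01 z).1
  · simpa using Complex.real_le_real.2 (hf01 z).2

lemma Complex.norm_le_one_of_nonneg_of_le_one {z : ℂ} (h0 : 0 ≤ z) (h1 : z ≤ 1) : ‖z‖ ≤ 1 :=
  Complex.real_le_real.1 (by rwa [Complex.norm_of_nonneg' h0, Complex.ofReal_one])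

lemma ContinuousMap.sum_le_one_of_pairwiseDisjoint {X ι : Type*} [TopologicalSpace X]
    {s : Finset ι} {a : ι → C(X, ℂ)} {V : ι → Set X} (hV : (s : Set ι).PairwiseDisjoint V)
    (ha0 : ∀ i ∈ s, EqOn (a i) 0 (V i)ᶜ) (ha1 : ∀ i ∈ s, a i ≤ 1) : ∑ i ∈ s, a i ≤ 1 := by
  refine ContinuousMap.le_def.2 fun x => ?_
  rw [ContinuousMap.coe_sum, Finset.sum_apply]
  by_cases hx : ∃ i ∈ s, x ∈ V i
  · obtain ⟨i, hi, hxi⟩ := hx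
    rw [Finset.sum_eq_single_of_mem i hi fun j hj hji =>
      ha0 j hj fun hxj => (hV hj hi hji).ne_of_mem hxj hxi rfl]
    exact ContinuousMap.le_def.1 (ha1 i hi) x
  · push Not at hx
    rw [Finset.sum_eq_zero fun i hi => ha0 i hi (hx i hi)]
    exact zero_le_one

lemma isLocallyInjective_of_continuous_kernel {X Y E : Type*} [TopologicalSpace X]
    [TopologicalSpace E] [Zero E] [T1Space E] {f : X → Y} {k : X × X → E} (hk : Continuous k)
    (hkf : ∀ q, k (q, q) ≠ 0 ∧ ∀ p, f p = f q → p ≠ q → k (p, q) = 0) :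
    IsLocallyInjective f := by
  intro x
  obtain ⟨U, V, hU, hV, hxU, hxV, hUV⟩ :=
    isOpen_prod_iff.1 (hk.isOpen_preimage _ isOpen_compl_singleton) x x (hkf x).1
  exact ⟨U ∩ V, hU.inter hV, ⟨hxU, hxV⟩, fun p hp q hq hpq =>
    by_contra fun hne => hUV (mk_mem_prod hp.1 hq.2) ((hkf q).2 p hpq hne)⟩

lemma IsOpenMap.isLocalHomeomorph_of_isLocallyInjective {X Y : Type*} [TopologicalSpace X]
    [TopologicalSpace Y] {f : X → Y} (ho : IsOpenMap f) (hc : Continuous f)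
    (hi : IsLocallyInjective f) : IsLocalHomeomorph f := by
  refine isLocalHomeomorph_iff_isOpenEmbedding_restrict.2 fun x => ?_
  obtain ⟨U, hU, hxU, hinj⟩ := hi x
  exact ⟨U, hU.mem_nhds hxU, .of_continuous_injective_isOpenMap (hc.comp continuous_subtype_val)
    (injOn_iff_injective.1 hinj) (ho.domRestrict hU)⟩

lemma IsLocallyInjective.finite_preimage_singleton {X Y : Type*} [TopologicalSpace X]
    [TopologicalSpace Y] [CompactSpace X] [T1Space Y] {f : X → Y} (hc : Continuous f)
    (hi : IsLocallyInjective f) (y : Y) : (f ⁻¹' {y}).Finite := by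
  refine (isClosed_singleton.preimage hc).isCompact.finite
    (isDiscrete_iff_forall_mem_exists_isOpen.2 fun x hx => ?_)
  obtain ⟨U, hU, hxU, hinj⟩ := hi x
  exact ⟨U, hU, subset_antisymm (fun z hz => hinj hz.1 hxU (hz.2.trans hx.symm))
    (singleton_subset_iff.2 ⟨hxU, hx⟩)⟩

lemma OpenPartialHomeomorph.continuous_indicator_comp_symm {X Y M : Type*} [TopologicalSpace X]
    [TopologicalSpace Y] [CompactSpace X] [T2Space Y] [TopologicalSpace M] [Zero M]
    (e : OpenPartialHomeomorph X Y) {h : X → M} (hh : Continuous h)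
    (hsupp : tsupport h ⊆ e.source) : Continuous (e.target.indicator (h ∘ e.symm)) := by
  have hK : IsClosed (e '' tsupport h) :=
    ((isClosed_tsupport h).isCompact.image_of_continuousOn (e.continuousOn.mono hsupp)).isClosed
  refine ContinuousOn.continuous_of_tsupport_subset ?_ e.open_target ?_
  · exact (hh.comp_continuousOn e.continuousOn_symm).congr fun y hy => indicator_of_mem hy _
  · refine (closure_minimal ?_ hK).trans ?_
    · rw [support_indicator]
      exact fun y ⟨hy, hhy⟩ => ⟨e.symm y, subset_tsupport _ hhy, e.right_inv hy⟩
    · rintro _ ⟨x, hx, rfl⟩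
      exact e.map_source (hsupp hx)

lemma IsLocalHomeomorph.exists_partitionOfUnity {X Y : Type*} [TopologicalSpace X]
    [TopologicalSpace Y] [CompactSpace X] [T2Space X] {f : X → Y} (hf : IsLocalHomeomorph f) :
    ∃ (t : Finset X) (e : t → OpenPartialHomeomorph X Y) (ρ : PartitionOfUnity t X),
      (∀ i, EqOn f (e i) (e i).source) ∧ ρ.IsSubordinate fun i => (e i).source := by
  choose e he using hf
  obtain ⟨t, ht⟩ := isCompact_univ.elim_finite_subcover (fun x => (e x).source)
    (fun x => (e x).open_source) fun x _ => mem_iUnion.2 ⟨x, (he x).1⟩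
  obtain ⟨ρ, hρ⟩ := PartitionOfUnity.exists_isSubordinate isClosed_univ
    (fun i : t => (e i).source) (fun i => (e i).open_source) fun x _ => by
      simpa using ht (mem_univ x)
  exact ⟨t, fun i => e i, ρ, fun i => (he i).2 ▸ eqOn_refl _ _, hρ⟩

lemma PartitionOfUnity.sum_sqrt_mul_sqrt_eq_ite {X Y ι : Type*} [TopologicalSpace X]
    [TopologicalSpace Y] [DecidableEq X] [Fintype ι] {f : X → Y}
    {e : ι → OpenPartialHomeomorph X Y} {ρ : PartitionOfUnity ι X}
    (he : ∀ i, EqOn f (e i) (e i).source) (hρ : ρ.IsSubordinate fun i => (e i).source)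
    {x z : X} (hxz : f z = f x) :
    ∑ i, √(ρ i x) * √(ρ i z) = if z = x then 1 else 0 := by
  split_ifs with h
  · subst h
    simp_rw [Real.mul_self_sqrt (ρ.nonneg _ _)]
    rw [← finsum_eq_sum_of_fintype, ρ.sum_eq_one (mem_univ _)]
  · refine Finset.sum_eq_zero fun i _ => by_contra fun hne => h ?_
    have hx : x ∈ (e i).source := hρ i (subset_tsupport _ fun h0 => hne (by simp [h0]))
    have hz : z ∈ (e i).source := hρ i (subset_tsupport _ fun h0 => hne (by simp [h0]))
    exact (e i).injOn hz hx (by rw [← he i hz, ← he i hx, hxz])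

lemma PositiveLinearMap.norm_apply_le_of_norm_le {X Y : Type*} [TopologicalSpace X]
    [CompactSpace X] [TopologicalSpace Y] (L : C(X, ℂ) →ₚ[ℂ] C(Y, ℂ)) {g h : C(X, ℂ)}
    (hgh : ∀ x, (‖g x‖ : ℂ) ≤ h x) (y : Y) : ‖L g y‖ ≤ ‖L h y‖ := by
  obtain ⟨c, hc, hcg⟩ := Complex.exists_norm_eq_mul_self (L g y)
  -- `c • g + star (c • g) = 2 Re (c • g) ≤ 2 h`, and `L` commutes with `star`
  have hre : c • g + star (c • g) ≤ (2 : ℂ) • h := ContinuousMap.le_def.2 fun x => by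
    have : ((c * g x).re : ℂ) ≤ h x := (Complex.real_le_real.2 (by
      simpa [hc] using Complex.re_le_norm (c * g x))).trans (hgh x)
    change c * g x + star (c * g x) ≤ 2 * h x
    rw [RCLike.star_def, Complex.add_conj, Complex.ofReal_mul, Complex.ofReal_ofNat]
    exact mul_le_mul_of_nonneg_left this zero_le_two
  have hLre : L (c • g + star (c • g)) y = 2 * ‖L g y‖ := by
    rw [map_add, map_star, map_smul]
    change c * L g y + star (c * L g y) = _
    rw [← hcg, RCLike.star_def, Complex.conj_ofReal, two_mul]
  have hh : 0 ≤ h :=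
    ContinuousMap.le_def.2 fun x => (by positivity : (0 : ℂ) ≤ ‖g x‖).trans (hgh x)
  have hLh : 0 ≤ L h y := ContinuousMap.le_def.1 (L.map_nonneg hh) y
  have hle := ContinuousMap.le_def.1 (OrderHomClass.mono L hre) y
  rw [hLre, map_smul, ContinuousMap.smul_apply, smul_eq_mul, ← Complex.norm_of_nonneg' hLh] at hle
  have : 2 * ‖L g y‖ ≤ 2 * ‖L h y‖ := by exact_mod_cast hle
  linarith

def IsQuasiBasis {X Y ι : Type*} [TopologicalSpace X] [TopologicalSpace Y] [Fintype ι]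
    (φ : C(X, Y)) (L : C(X, ℂ) →ₗ[ℂ] C(Y, ℂ)) (u : ι → C(X, ℂ)) : Prop :=
  ∀ a : C(X, ℂ), a = ∑ i, u i * (L (star (u i) * a)).comp φ

lemma IsQuasiBasis.comp_equiv {X Y ι κ : Type*} [TopologicalSpace X] [TopologicalSpace Y]
    [Fintype ι] [Fintype κ] {φ : C(X, Y)} {L : C(X, ℂ) →ₗ[ℂ] C(Y, ℂ)} {u : ι → C(X, ℂ)}
    (hu : IsQuasiBasis φ L u) (e : κ ≃ ι) : IsQuasiBasis φ L (u ∘ e) :=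
  fun a => (hu a).trans (e.sum_comp fun i => u i * (L (star (u i) * a)).comp φ).symm

namespace IsTransferOpC

variable {X : Type*} [TopologicalSpace X] {φ : C(X, X)} {L : C(X, ℂ) →ₗ[ℂ] C(X, ℂ)}
  {ι : Type*} [Fintype ι] {u : ι → C(X, ℂ)}

lemma map_one (hL : IsTransferOpC φ L) : L 1 = 1 := hL.1

lemma map_comp_mul (hL : IsTransferOpC φ L) (f g : C(X, ℂ)) : L (f.comp φ * g) = f * L g :=
  hL.2.2 f g

noncomputable def toPositiveLinearMap (hL : IsTransferOpC φ L) : C(X, ℂ) →ₚ[ℂ] C(X, ℂ) :=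
  .mk₀ L fun f hf => ContinuousMap.le_def.2 (hL.2.1 f (ContinuousMap.le_def.1 hf))

variable [CompactSpace X]

lemma norm_apply_le_of_norm_le (hL : IsTransferOpC φ L) {g h : C(X, ℂ)}
    (hgh : ∀ x, (‖g x‖ : ℂ) ≤ h x) (y : X) : ‖L g y‖ ≤ ‖L h y‖ :=
  hL.toPositiveLinearMap.norm_apply_le_of_norm_le hgh y

lemma one_le_sum_norm_sq_mul_apply (hL : IsTransferOpC φ L) (hu : IsQuasiBasis φ L u) {a : C(X, ℂ)}
    (ha : 0 ≤ a) {x : X} (hax : a x = 1) :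
    1 ≤ ((∑ i, ‖u i‖ ^ 2 : ℝ) : ℂ) * L a (φ x) := by
  have hLa : 0 ≤ L a (φ x) := ContinuousMap.le_def.1 (hL.toPositiveLinearMap.map_nonneg ha) _
  have hterm : ∀ i, ‖L (star (u i) * a) (φ x)‖ ≤ ‖u i‖ * ‖L a (φ x)‖ := fun i => by
    refine (hL.norm_apply_le_of_norm_le (h := (‖u i‖ : ℂ) • a) (fun z => ?_) _).trans ?_
    · have haz : 0 ≤ a z := ContinuousMap.le_def.1 ha z
      simp only [ContinuousMap.mul_apply, ContinuousMap.smul_apply, ContinuousMap.star_apply,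
        norm_mul, norm_star, smul_eq_mul, Complex.ofReal_mul, Complex.norm_of_nonneg' haz]
      exact mul_le_mul_of_nonneg_right (Complex.real_le_real.2 ((u i).norm_coe_le_norm z)) haz
    · simp
  have hreal : 1 ≤ (∑ i, ‖u i‖ ^ 2) * ‖L a (φ x)‖ := calc
    1 = ‖a x‖ := by simp [hax]
    _ = ‖∑ i, u i x * L (star (u i) * a) (φ x)‖ := by
      conv_lhs => rw [hu a]
      simp
    _ ≤ ∑ i, ‖u i‖ * (‖u i‖ * ‖L a (φ x)‖) := by
      refine (norm_sum_le _ _).trans (Finset.sum_le_sum fun i _ => ?_)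
      rw [norm_mul]
      exact mul_le_mul ((u i).norm_coe_le_norm x) (hterm i) (norm_nonneg _) (norm_nonneg _)
    _ = (∑ i, ‖u i‖ ^ 2) * ‖L a (φ x)‖ := by
      rw [Finset.sum_mul]
      exact Finset.sum_congr rfl fun i _ => by ring
  rw [← Complex.norm_of_nonneg' hLa]
  exact_mod_cast hreal

variable [T2Space X]

lemma apply_eq_zero_of_eqOn_fiber (hL : IsTransferOpC φ L) {f : C(X, ℂ)} {y : X}
    (hf : EqOn f 0 (φ ⁻¹' {y})) : L f y = 0 := by
  refine norm_le_zero_iff.1 (le_of_forall_gt_imp_ge_of_dense fun ε hε => ?_)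
  set U := {x | ‖f x‖ < ε}
  have hU : IsOpen U := isOpen_lt (by fun_prop) continuous_const
  have hK : IsClosed (φ '' Uᶜ) := (hU.isClosed_compl.isCompact.image φ.continuous).isClosed
  have hyK : y ∉ φ '' Uᶜ := by
    rintro ⟨x, hxU, rfl⟩
    exact hxU (by simpa [U, hf rfl] using hε)
  -- multiplying `f` by `g ∘ φ` does not change `L f y`, but makes `f` smaller than `ε`
  obtain ⟨g, hgy, hgK, hg0, hg1⟩ := exists_complex_urysohn hK hyK
  have hbound : ∀ x, (‖(g.comp φ * f) x‖ : ℂ) ≤ ((ε : ℂ) • 1 : C(X, ℂ)) x := fun x => by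
    suffices ‖g (φ x)‖ * ‖f x‖ ≤ ε by simpa using Complex.real_le_real.2 this
    by_cases hx : x ∈ U
    · exact (mul_le_of_le_one_left (norm_nonneg _)
        (Complex.norm_le_one_of_nonneg_of_le_one (hg0 _) (hg1 _))).trans hx.le
    · simp [hgK ⟨x, hx, rfl⟩, hε.le]
  calc ‖L f y‖ = ‖L (g.comp φ * f) y‖ := by simp [hL.map_comp_mul, hgy]
    _ ≤ ‖L ((ε : ℂ) • 1) y‖ := hL.norm_apply_le_of_norm_le hbound y
    _ = ε := by simp [hL.map_one, hε.le]

lemma card_le_of_subset_fiber (hL : IsTransferOpC φ L) (hu : IsQuasiBasis φ L u)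
    {S : Finset X} {y : X} (hS : ∀ z ∈ S, φ z = y) : (S.card : ℝ) ≤ ∑ i, ‖u i‖ ^ 2 := by
  set M := ∑ i, ‖u i‖ ^ 2
  obtain ⟨V, hV, hVS⟩ := S.finite_toSet.t2_separation
  have hbump : ∀ z, ∃ a : C(X, ℂ), a z = 1 ∧ EqOn a 0 (V z)ᶜ ∧ 0 ≤ a ∧ a ≤ 1 := fun z =>
    exists_complex_urysohn (hV z).2.isClosed_compl (not_not.2 (hV z).1)
  choose a ha1 ha0 hapos hale using hbump
  have hsum : ∑ z ∈ S, a z ≤ 1 :=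
    ContinuousMap.sum_le_one_of_pairwiseDisjoint hVS (fun z _ => ha0 z) fun z _ => hale z
  have hM : (0 : ℂ) ≤ M := Complex.real_le_real.2 (by positivity)
  have : ((S.card : ℝ) : ℂ) ≤ M := calc
    ((S.card : ℝ) : ℂ) = ∑ z ∈ S, 1 := by simp
    _ ≤ ∑ z ∈ S, M * L (a z) y := Finset.sum_le_sum fun z hz =>
      hS z hz ▸ hL.one_le_sum_norm_sq_mul_apply hu (hapos z) (ha1 z)
    _ = M * L (∑ z ∈ S, a z) y := by simp [Finset.mul_sum]
    _ ≤ M * L 1 y := mul_le_mul_of_nonneg_left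
      (ContinuousMap.le_def.1 (OrderHomClass.mono hL.toPositiveLinearMap hsum) y) hM
    _ = M := by simp [hL.map_one]
  exact Complex.real_le_real.1 this

lemma finite_fiber (hL : IsTransferOpC φ L) (hu : IsQuasiBasis φ L u) (y : X) :
    (φ ⁻¹' {y}).Finite := by
  by_contra hinf
  obtain ⟨S, hS, hcard⟩ := Set.Infinite.exists_subset_card_eq hinf (⌊∑ i, ‖u i‖ ^ 2⌋₊ + 1)
  have := hL.card_le_of_subset_fiber hu fun z hz => hS hz
  rw [hcard] at this
  push_cast at this
  linarith [Nat.lt_floor_add_one (∑ i, ‖u i‖ ^ 2)]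

lemma apply_mul_eq_of_eqOn_fiber_diff (hL : IsTransferOpC φ L) {q : X} {a : C(X, ℂ)}
    (ha : EqOn a 0 (φ ⁻¹' {φ q} \ {q})) (f : C(X, ℂ)) :
    L (f * a) (φ q) = f q * L a (φ q) := by
  have h := hL.apply_eq_zero_of_eqOn_fiber (f := f * a - f q • a) (y := φ q) fun x hx => by
    by_cases hxq : x = q
    · simp [hxq]
    · simp [ha ⟨hx, hxq⟩]
  simpa [sub_eq_zero] using h

lemma apply_eq_kernel_mul (hL : IsTransferOpC φ L) (hu : IsQuasiBasis φ L u) {p q : X}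
    (hpq : φ p = φ q) {a : C(X, ℂ)} (ha : EqOn a 0 (φ ⁻¹' {φ q} \ {q})) :
    a p = (∑ i, u i p * star (u i q)) * L a (φ q) := by
  conv_lhs => rw [hu a]
  simp only [ContinuousMap.coe_sum, Finset.sum_apply, ContinuousMap.mul_apply,
    ContinuousMap.comp_apply, hpq, hL.apply_mul_eq_of_eqOn_fiber_diff ha,
    ContinuousMap.star_apply, Finset.sum_mul, mul_assoc]

lemma isLocallyInjective (hL : IsTransferOpC φ L) (hu : IsQuasiBasis φ L u) :
    IsLocallyInjective φ := by
  refine isLocallyInjective_of_continuous_kernel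
    (k := fun pq : X × X => ∑ i, u i pq.1 * star (u i pq.2)) (by fun_prop) fun q => ?_
  obtain ⟨a, haq, ha0, -, -⟩ := exists_complex_urysohn (s := φ ⁻¹' {φ q} \ {q})
    (hL.finite_fiber hu (φ q)).sdiff.isClosed fun h => h.2 rfl
  have hq := hL.apply_eq_kernel_mul hu rfl ha0
  rw [haq] at hq
  refine ⟨left_ne_zero_of_mul_eq_one hq.symm, fun p hpq hne => ?_⟩
  have hp := hL.apply_eq_kernel_mul hu hpq ha0
  rw [ha0 ⟨hpq, hne⟩] at hp
  exact (mul_eq_zero.1 hp.symm).resolve_right (right_ne_zero_of_mul_eq_one hq.symm)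

lemma isOpenMap (hL : IsTransferOpC φ L) (hu : IsQuasiBasis φ L u) : IsOpenMap φ := by
  intro U hU
  refine isOpen_iff_mem_nhds.2 ?_
  rintro _ ⟨x, hxU, rfl⟩
  obtain ⟨a, hax, haU, ha0, -⟩ := exists_complex_urysohn hU.isClosed_compl (not_not.2 hxU)
  have hW : IsOpen {y | L a y ≠ 0} := (L a).continuous.isOpen_preimage _ isOpen_compl_singleton
  have hx : L a (φ x) ≠ 0 := fun h =>
    zero_lt_one.not_ge (by simpa [h] using hL.one_le_sum_norm_sq_mul_apply hu ha0 hax)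
  refine Filter.mem_of_superset (hW.mem_nhds hx) fun y hy => ?_
  by_contra hyU
  exact hy (hL.apply_eq_zero_of_eqOn_fiber fun z hz => haU fun hzU => hyU ⟨z, hzU, hz⟩)

lemma isLocalHomeomorph (hL : IsTransferOpC φ L) (hu : IsQuasiBasis φ L u) :
    IsLocalHomeomorph φ :=
  (hL.isOpenMap hu).isLocalHomeomorph_of_isLocallyInjective φ.continuous
    (hL.isLocallyInjective hu)

end IsTransferOpC

namespace IsLocalHomeomorph

section FiberAverage

variable {X Y : Type*} [TopologicalSpace X] [TopologicalSpace Y] [CompactSpace X] [T2Space Y]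
  {φ : C(X, Y)}

noncomputable def fiber (hφ : IsLocalHomeomorph φ) (y : Y) : Finset X :=
  (hφ.isLocallyInjective.finite_preimage_singleton φ.continuous y).toFinset

@[simp] lemma mem_fiber (hφ : IsLocalHomeomorph φ) {x : X} {y : Y} :
    x ∈ hφ.fiber y ↔ φ x = y := by
  simp [fiber]

lemma sum_fiber_eq_indicator (hφ : IsLocalHomeomorph φ) {M : Type*} [AddCommMonoid M]
    {e : OpenPartialHomeomorph X Y} (he : EqOn φ e e.source) {h : X → M}
    (hh : Function.support h ⊆ e.source) (y : Y) :
    ∑ x ∈ hφ.fiber y, h x = e.target.indicator (h ∘ e.symm) y := by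
  by_cases hy : y ∈ e.target
  · have hsy : e.symm y ∈ e.source := e.map_target hy
    rw [indicator_of_mem hy, Finset.sum_eq_single_of_mem (e.symm y)
      (hφ.mem_fiber.2 ((he hsy).trans (e.right_inv hy)))]
    · rfl
    · intro x hx hne
      by_contra hhx
      refine hne ?_
      rw [← hφ.mem_fiber.1 hx, he (hh hhx), e.left_inv (hh hhx)]
  · rw [indicator_of_notMem hy]
    refine Finset.sum_eq_zero fun x hx => by_contra fun hhx => hy ?_
    rw [← hφ.mem_fiber.1 hx, he (hh hhx)]
    exact e.map_source (hh hhx)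

lemma card_fiber_ne_zero (hφ : IsLocalHomeomorph φ) (hs : Function.Surjective φ) (y : Y) :
    ((hφ.fiber y).card : ℂ) ≠ 0 := by
  obtain ⟨x, rfl⟩ := hs y
  exact Nat.cast_ne_zero.2 (Finset.card_ne_zero_of_mem (hφ.mem_fiber.2 rfl))

variable [T2Space X]

lemma continuous_sum_fiber (hφ : IsLocalHomeomorph φ) (f : C(X, ℂ)) :
    Continuous fun y => ∑ x ∈ hφ.fiber y, f x := by
  obtain ⟨t, e, ρ, he, hρ⟩ := hφ.exists_partitionOfUnity
  set g : t → X → ℂ := fun i x => (ρ i x : ℂ) * f x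
  have hg : ∀ i, tsupport (g i) ⊆ (e i).source := fun i =>
    tsupport_mul_subset_left.trans ((tsupport_comp_subset Complex.ofReal_zero _).trans (hρ i))
  have hsum : (fun y => ∑ x ∈ hφ.fiber y, f x) =
      fun y => ∑ i, (e i).target.indicator (g i ∘ (e i).symm) y := by
    funext y
    simp_rw [← hφ.sum_fiber_eq_indicator (he _) ((subset_tsupport _).trans (hg _))]
    rw [Finset.sum_comm]
    refine Finset.sum_congr rfl fun x _ => ?_
    rw [← Finset.sum_mul, ← Complex.ofReal_sum, ← finsum_eq_sum_of_fintype,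
      ρ.sum_eq_one (mem_univ x), Complex.ofReal_one, one_mul]
  rw [hsum]
  exact continuous_finsetSum _ fun i _ =>
    (e i).continuous_indicator_comp_symm (by fun_prop) (hg i)

lemma continuous_card_fiber (hφ : IsLocalHomeomorph φ) :
    Continuous fun y => ((hφ.fiber y).card : ℝ) := by
  refine (Complex.continuous_re.comp (hφ.continuous_sum_fiber 1)).congr fun y => ?_
  simp

noncomputable def fiberAverage (hφ : IsLocalHomeomorph φ) (hs : Function.Surjective φ) :
    C(X, ℂ) →ₗ[ℂ] C(Y, ℂ) where
  toFun f := ⟨fun y => (∑ x ∈ hφ.fiber y, f x) / (hφ.fiber y).card,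
    (hφ.continuous_sum_fiber f).div (Complex.continuous_ofReal.comp hφ.continuous_card_fiber)
      (by simpa using hφ.card_fiber_ne_zero hs)⟩
  map_add' f g := by ext y; simp [Finset.sum_add_distrib, add_div]
  map_smul' c f := by ext y; simp [← Finset.mul_sum, mul_div_assoc]

lemma fiberAverage_apply (hφ : IsLocalHomeomorph φ) (hs : Function.Surjective φ) (f : C(X, ℂ))
    (y : Y) : hφ.fiberAverage hs f y = (∑ x ∈ hφ.fiber y, f x) / (hφ.fiber y).card :=
  rfl

end FiberAverage

variable {X : Type*} [TopologicalSpace X] [CompactSpace X] [T2Space X] {φ : C(X, X)}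

lemma isTransferOpC_fiberAverage (hφ : IsLocalHomeomorph φ) (hs : Function.Surjective φ) :
    IsTransferOpC φ (hφ.fiberAverage hs) := by
  refine ⟨?_, fun f hf y => ?_, fun f g => ?_⟩
  · ext y
    simp [fiberAverage_apply, div_self (hφ.card_fiber_ne_zero hs y)]
  · rw [fiberAverage_apply]
    exact div_nonneg (Finset.sum_nonneg fun x _ => hf x) (Nat.cast_nonneg _)
  · ext y
    simp only [fiberAverage_apply, ContinuousMap.mul_apply, ContinuousMap.comp_apply]
    rw [Finset.sum_congr rfl fun x hx => by rw [hφ.mem_fiber.1 hx], ← Finset.mul_sum,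
      mul_div_assoc]

lemma exists_isQuasiBasis_fiberAverage (hφ : IsLocalHomeomorph φ) (hs : Function.Surjective φ) :
    ∃ (t : Finset X) (u : t → C(X, ℂ)), IsQuasiBasis φ (hφ.fiberAverage hs) u := by
  classical
  obtain ⟨t, e, ρ, he, hρ⟩ := hφ.exists_partitionOfUnity
  set n : X → ℕ := fun x => (hφ.fiber (φ x)).card
  have hn : Continuous fun x => (n x : ℝ) := hφ.continuous_card_fiber.comp φ.continuous
  set u : t → C(X, ℂ) := fun i => ⟨fun x => (√(ρ i x) * √(n x) : ℝ), by fun_prop⟩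
  have hker : ∀ x, ∀ z ∈ hφ.fiber (φ x),
      ∑ i, u i x * star (u i z) = if z = x then (n x : ℂ) else 0 := by
    intro x z hz
    have hnz : n z = n x := by simp [n, hφ.mem_fiber.1 hz]
    have : ∑ i, √(ρ i x) * √(n x) * (√(ρ i z) * √(n z)) =
        (∑ i, √(ρ i x) * √(ρ i z)) * n x := by
      rw [hnz, Finset.sum_mul]
      refine Finset.sum_congr rfl fun i _ => ?_
      rw [mul_mul_mul_comm, Real.mul_self_sqrt (Nat.cast_nonneg _)]
    simp only [u, ContinuousMap.coe_mk, RCLike.star_def, Complex.conj_ofReal,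
      ← Complex.ofReal_mul, ← Complex.ofReal_sum, this,
      ρ.sum_sqrt_mul_sqrt_eq_ite he hρ (hφ.mem_fiber.1 hz)]
    split_ifs <;> simp
  refine ⟨t, u, fun a => ContinuousMap.ext fun x => ?_⟩
  have hnx : (n x : ℂ) ≠ 0 := hφ.card_fiber_ne_zero hs (φ x)
  calc a x = (∑ z ∈ hφ.fiber (φ x), (if z = x then (n x : ℂ) else 0) * a z) / n x := by
        rw [Finset.sum_eq_single_of_mem x (hφ.mem_fiber.2 rfl) fun z _ hzx => by simp [hzx]]
        simp [hnx]
    _ = (∑ z ∈ hφ.fiber (φ x), ∑ i, u i x * star (u i z) * a z) / n x := by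
        congr 1
        refine Finset.sum_congr rfl fun z hz => ?_
        rw [← hker x z hz, Finset.sum_mul]
    _ = _ := by
        rw [Finset.sum_comm]
        simp [fiberAverage_apply, Finset.mul_sum, Finset.sum_div, mul_div_assoc, mul_assoc, n]

end IsLocalHomeomorph

/-- the endomorphism `α_φ(a) = a ∘ φ` of `C(X)` is of finite type
(there is a transfer operator for it admitting a quasi-basis) iff `φ` is a local
homeomorphism. -/
theorem stmt3 {X : Type*} [TopologicalSpace X] [CompactSpace X] [T2Space X]
    (φ : C(X, X)) (hsurj : Function.Surjective φ) :
    (∃ (L : C(X, ℂ) →ₗ[ℂ] C(X, ℂ)) (N : ℕ) (u : Fin N → C(X, ℂ)),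
        IsTransferOpC φ L ∧
        ∀ a : C(X, ℂ), a = ∑ i, u i * ((L (star (u i) * a)).comp φ)) ↔
      IsLocalHomeomorph (⇑φ) := by
  refine ⟨fun ⟨_, _, _, hL, hu⟩ => hL.isLocalHomeomorph hu, fun hφ => ?_⟩
  obtain ⟨t, u, hu⟩ := hφ.exists_isQuasiBasis_fiberAverage hsurj
  exact ⟨hφ.fiberAverage hsurj, t.card, u ∘ t.equivFin.symm,
    hφ.isTransferOpC_fiberAverage hsurj, hu.comp_equiv _⟩
end

section
/- Let X be a compact Hausdorff space, φ : X → X a continuous surjection, and L : C(X) → C(X) a transfer operator for the endomorphism α_φ(a) = a ∘ φ admitting a quasi-basis u₁,…,u_N ∈ C(X) (so a = ∑ᵢ uᵢ·α_φ(L(uᵢ*·a)) for all a ∈ C(X)). Then φ is at most N-to-one: for every y ∈ X the fiber φ⁻¹(y) is finite with at most N elements. -/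
open scoped ComplexOrder

/-- if a transfer operator for `α_φ` admits a quasi-basis with `N`
elements, then `φ` is at most `N`-to-one. -/
theorem stmt4 {X : Type*} [TopologicalSpace X] [CompactSpace X] [T2Space X]
    (φ : C(X, X)) (hsurj : Function.Surjective φ)
    (L : C(X, ℂ) →ₗ[ℂ] C(X, ℂ)) (hL : IsTransferOpC φ L)
    (N : ℕ) (u : Fin N → C(X, ℂ))
    (hu : ∀ a : C(X, ℂ), a = ∑ i, u i * ((L (star (u i) * a)).comp φ)) :
    ∀ y : X, (⇑φ ⁻¹' {y}).Finite ∧ (⇑φ ⁻¹' {y}).ncard ≤ N := by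
  intro y
  have key : ∀ (x : Fin (N + 1) → X), Function.Injective x →
      (∀ j, φ (x j) = y) → False := by
    intro x hinj hx
    have hbump : ∀ k : Fin (N + 1), ∃ f : C(X, ℂ),
        ∀ j, f (x j) = if j = k then 1 else 0 := by
      intro k
      have hs : IsClosed (x '' {j | j ≠ k}) := (Set.toFinite _).isClosed
      have ht : IsClosed ({x k} : Set X) := isClosed_singleton
      have hdisj : Disjoint (x '' {j | j ≠ k}) {x k} := by
        rw [Set.disjoint_singleton_right]
        rintro ⟨j, hj, hje⟩
        exact hj (hinj hje)
      obtain ⟨g, hg0, hg1, -⟩ := exists_continuous_zero_one_of_isClosed hs ht hdisj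
      refine ⟨(⟨Complex.ofReal, Complex.continuous_ofReal⟩ : C(ℝ, ℂ)).comp g, ?_⟩
      intro j
      by_cases hjk : j = k
      · subst hjk
        simp [hg1 (Set.mem_singleton _)]
      · have := hg0 ⟨j, hjk, rfl⟩
        simp only [Pi.zero_apply] at this
        simp [hjk, this]
    choose f hf using hbump
    set A : Matrix (Fin (N + 1)) (Fin N) ℂ := Matrix.of fun j i => u i (x j) with hA
    set B : Matrix (Fin N) (Fin (N + 1)) ℂ :=
      Matrix.of fun i k => (L (star (u i) * f k)) y with hB
    have hAB : A * B = 1 := by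
      ext j k
      have h1 := congrArg (fun g : C(X, ℂ) => g (x j)) (hu (f k))
      simp only [ContinuousMap.sum_apply, ContinuousMap.mul_apply,
        ContinuousMap.comp_apply, hx j, hf k j] at h1
      rw [Matrix.mul_apply, Matrix.one_apply]
      exact h1.symm
    have hr1 : (A * B).rank = N + 1 := by
      rw [hAB, Matrix.rank_one, Fintype.card_fin]
    have hr2 : (A * B).rank ≤ N := by
      refine le_trans (Matrix.rank_mul_le_left A B) ?_
      simpa using A.rank_le_card_width
    omega
  have main : ∀ t : Set X, t ⊆ ⇑φ ⁻¹' {y} → t.Finite → t.ncard = N + 1 → False := by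
    intro t hts htf htc
    haveI := htf.fintype
    have hcard : Fintype.card t = N + 1 := by
      rw [← Nat.card_eq_fintype_card, Nat.card_coe_set_eq, htc]
    let e := (Fintype.equivFinOfCardEq hcard).symm
    refine key (fun j => (e j : X)) ?_ ?_
    · intro j j' h
      exact e.injective (Subtype.val_injective h)
    · intro j
      exact hts (e j).2
  have hfin : (⇑φ ⁻¹' {y}).Finite := by
    by_contra h
    have hinf : (⇑φ ⁻¹' {y}).Infinite := h
    obtain ⟨t, hts, htf, htc⟩ := hinf.exists_subset_ncard_eq (N + 1)
    exact main t hts htf htc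
  refine ⟨hfin, ?_⟩
  by_contra h
  push_neg at h
  obtain ⟨t, hts, htc⟩ := Set.exists_subset_card_eq (show N + 1 ≤ _ from h)
  exact main t hts (hfin.subset hts) htc
end

section
/- Let (Ω,Σ,μ) be a σ-finite measure space, Φ : Ω → Ω a measurable map, and ρ : Ω → ℂ a measurable function. The following are equivalent: (1) for every measurable h : Ω → ℂ with ∫ |h|² dμ < ∞, the function ω ↦ ρ(ω)·h(Φ(ω)) is square-integrable and ∫ |ρ·(h∘Φ)|² dμ = ∫ |h|² dμ, so that Th := ρ·(h∘Φ) defines a linear isometry of L²(μ); (2) for every U ∈ Σ, ∫_{Φ⁻¹(U)} |ρ|² dμ = μ(U). -/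
open MeasureTheory
open scoped ENNReal NNReal

/-- for a σ-finite measure space `(Ω, Σ, μ)`, a measurable map `Φ : Ω → Ω` and a
measurable weight `ρ : Ω → ℂ`, the formula `T h = ρ · (h ∘ Φ)` defines a linear isometry of
`L²(μ)` (i.e. preserves the `L²`-integral of every measurable square-integrable function)
iff `∫_{Φ⁻¹(U)} |ρ|² dμ = μ(U)` for every measurable set `U`. -/
theorem stmt9 {Ω : Type*} [MeasurableSpace Ω] (μ : Measure Ω) [SigmaFinite μ]
    (Φ : Ω → Ω) (hΦ : Measurable Φ) (ρ : Ω → ℂ) (hρ : Measurable ρ) :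
    (∀ h : Ω → ℂ, Measurable h → (∫⁻ ω, (‖h ω‖₊ : ℝ≥0∞) ^ 2 ∂μ) < ⊤ →
        (∫⁻ ω, (‖ρ ω * h (Φ ω)‖₊ : ℝ≥0∞) ^ 2 ∂μ) = ∫⁻ ω, (‖h ω‖₊ : ℝ≥0∞) ^ 2 ∂μ) ↔
      (∀ U : Set Ω, MeasurableSet U →
        (∫⁻ ω in Φ ⁻¹' U, (‖ρ ω‖₊ : ℝ≥0∞) ^ 2 ∂μ) = μ U) := by
  have hρsq : Measurable fun ω => (‖ρ ω‖₊ : ℝ≥0∞) ^ 2 :=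
    (hρ.nnnorm.coe_nnreal_ennreal).pow_const 2
  set ν : Measure Ω := (μ.withDensity fun ω => (‖ρ ω‖₊ : ℝ≥0∞) ^ 2).map Φ with hν
  have hνU : ∀ U : Set Ω, MeasurableSet U →
      ν U = ∫⁻ ω in Φ ⁻¹' U, (‖ρ ω‖₊ : ℝ≥0∞) ^ 2 ∂μ := by
    intro U hU
    rw [hν, Measure.map_apply hΦ hU, withDensity_apply _ (hΦ hU)]
  constructor
  · intro H U hU
    rw [← hνU U hU]
    have key : ∀ V : Set Ω, MeasurableSet V → μ V < ⊤ → ν V = μ V := by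
      intro V hV hVfin
      have hind : (fun ω => (‖Set.indicator V (1 : Ω → ℂ) ω‖₊ : ℝ≥0∞) ^ 2)
          = Set.indicator V 1 := by
        funext ω
        by_cases hω : ω ∈ V <;> simp [Set.indicator_apply, hω]
      have hfin : (∫⁻ ω, (‖Set.indicator V (1 : Ω → ℂ) ω‖₊ : ℝ≥0∞) ^ 2 ∂μ) < ⊤ := by
        rw [hind, lintegral_indicator_one hV]; exact hVfin
      have h1 := H (Set.indicator V 1) (measurable_one.indicator hV) hfin
      have hlhs : (fun ω => (‖ρ ω * Set.indicator V (1 : Ω → ℂ) (Φ ω)‖₊ : ℝ≥0∞) ^ 2)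
          = Set.indicator (Φ ⁻¹' V) (fun ω => (‖ρ ω‖₊ : ℝ≥0∞) ^ 2) := by
        funext ω
        by_cases hω : Φ ω ∈ V <;> simp [Set.indicator_apply, hω]
      rw [hlhs, hind, lintegral_indicator_one hV,
        lintegral_indicator (hΦ hV)] at h1
      rw [hνU V hV]
      exact h1
    -- exhaust U by the spanning sets
    have hmono : Monotone fun n => U ∩ spanningSets μ n :=
      fun m n hmn => Set.inter_subset_inter_right U (monotone_spanningSets μ hmn)
    have hUnion : (⋃ n, U ∩ spanningSets μ n) = U := by
      rw [← Set.inter_iUnion, iUnion_spanningSets, Set.inter_univ]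
    have h1 : ν U = ⨆ n, ν (U ∩ spanningSets μ n) := by
      conv_lhs => rw [← hUnion]
      exact hmono.directed_le.measure_iUnion
    have h2 : μ U = ⨆ n, μ (U ∩ spanningSets μ n) := by
      conv_lhs => rw [← hUnion]
      exact hmono.directed_le.measure_iUnion
    rw [h1, h2]
    refine iSup_congr fun n => key _ (hU.inter (measurableSet_spanningSets μ n)) ?_
    exact (measure_mono (Set.inter_subset_right)).trans_lt (measure_spanningSets_lt_top μ n)
  · intro H h hh _
    have hνμ : ν = μ := by
      ext U hU
      rw [hνU U hU, H U hU]
    have hhsq : Measurable fun ω => (‖h ω‖₊ : ℝ≥0∞) ^ 2 :=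
      (hh.nnnorm.coe_nnreal_ennreal).pow_const 2
    calc (∫⁻ ω, (‖ρ ω * h (Φ ω)‖₊ : ℝ≥0∞) ^ 2 ∂μ)
        = ∫⁻ ω, ((fun x => (‖ρ x‖₊ : ℝ≥0∞) ^ 2) * fun x => (‖h (Φ x)‖₊ : ℝ≥0∞) ^ 2) ω ∂μ := by
          refine lintegral_congr fun ω => ?_
          simp [nnnorm_mul, mul_pow, ENNReal.coe_mul]
      _ = ∫⁻ ω, (‖h (Φ ω)‖₊ : ℝ≥0∞) ^ 2 ∂(μ.withDensity fun ω => (‖ρ ω‖₊ : ℝ≥0∞) ^ 2) := by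
          have hhΦsq : Measurable fun ω => (‖h (Φ ω)‖₊ : ℝ≥0∞) ^ 2 := hhsq.comp hΦ
          rw [lintegral_withDensity_eq_lintegral_mul μ hρsq hhΦsq]
      _ = ∫⁻ ω, (‖h ω‖₊ : ℝ≥0∞) ^ 2 ∂ν := (lintegral_map hhsq hΦ).symm
      _ = ∫⁻ ω, (‖h ω‖₊ : ℝ≥0∞) ^ 2 ∂μ := by rw [hνμ]
end

section
/- Let V be a set and Φ : V → V, ρ : V → ℂ two maps. The formula (Th)(v) := ρ(v)·h(Φ(v)) defines a (well-defined, bounded) linear isometry T of ℓ²(V) if and only if Φ is surjective and for every v ∈ V, ∑_{w ∈ Φ⁻¹(v)} |ρ(w)|² = 1. -/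
/-! Regrouping `∑ᵥ |ρ v|² |h (Φ v)|²` along the fibres of `Φ` gives `∑_w (∑_{Φ v = w} |ρ v|²) |h w|²`,
so the fibre condition makes `T` norm-preserving. Conversely, `T` applied to the basis vector `δ_w`
has squared norm `∑_{Φ v = w} |ρ v|²`, which must be `‖δ_w‖² = 1`; in particular no fibre is
empty. -/

theorem hasSum_mul_comp_of_hasSum_fiber {V W : Type*} (Φ : V → W) {a : V → ℝ} {b : W → ℝ}
    {S : ℝ} (ha : ∀ v, 0 ≤ a v) (hb : ∀ w, 0 ≤ b w)
    (hfib : ∀ w, HasSum (fun v : Φ ⁻¹' {w} => a v) 1) (hS : HasSum b S) :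
    HasSum (fun v => a v * b (Φ v)) S := by
  set f := (fun v => a v * b (Φ v)) ∘ Equiv.sigmaFiberEquiv Φ
  have hfib' : ∀ w, HasSum (fun v => f ⟨w, v⟩) (b w) := fun w => by
    have hw := (hfib w).mul_right (b w)
    rw [one_mul] at hw
    exact hw.congr_fun fun v => by
      change a v * b (Φ v) = a v * b w
      rw [show Φ v = w from v.2]
  have hf : Summable f :=
    (summable_sigma_of_nonneg fun _ => mul_nonneg (ha _) (hb _)).2
      ⟨fun w => (hfib' w).summable, hS.summable.congr fun w => (hfib' w).tsum_eq.symm⟩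
  rw [← (Equiv.sigmaFiberEquiv Φ).hasSum_iff, hS.unique (hf.hasSum.sigma hfib')]
  exact hf.hasSum

theorem lp.hasSum_norm_sq {ι : Type*} {E : ι → Type*} [∀ i, NormedAddCommGroup (E i)]
    (f : lp E 2) : HasSum (fun i => ‖f i‖ ^ 2) (‖f‖ ^ 2) := by
  simpa only [ENNReal.toReal_ofNat, Real.rpow_two] using lp.hasSum_norm (by norm_num) f

section WeightedComposition

variable {V W 𝕜 E : Type*} [NormedField 𝕜] [NormedAddCommGroup E] [NormedSpace 𝕜 E]
  {Φ : V → W} {ρ : V → 𝕜}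

theorem hasSum_norm_sq_weightedComp
    (hρ : ∀ w, HasSum (fun v : Φ ⁻¹' {w} => ‖ρ v‖ ^ 2) 1) (h : lp (fun _ : W => E) 2) :
    HasSum (fun v => ‖ρ v • h (Φ v)‖ ^ 2) (‖h‖ ^ 2) := by
  simpa only [norm_smul, mul_pow] using
    hasSum_mul_comp_of_hasSum_fiber Φ (fun _ => by positivity) (fun _ => by positivity) hρ
      (lp.hasSum_norm_sq h)

variable (Φ ρ) in
noncomputable def weightedCompₗᵢ (hρ : ∀ w, HasSum (fun v : Φ ⁻¹' {w} => ‖ρ v‖ ^ 2) 1) :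
    lp (fun _ : W => E) 2 →ₗᵢ[𝕜] lp (fun _ : V => E) 2 where
  toFun h := ⟨fun v => ρ v • h (Φ v), memℓp_gen <| by
    simpa only [ENNReal.toReal_ofNat, Real.rpow_two] using
      (hasSum_norm_sq_weightedComp hρ h).summable⟩
  map_add' g h := by ext v; exact smul_add _ _ _
  map_smul' c h := by ext v; exact smul_comm _ _ _
  norm_map' h := by
    refine (pow_left_inj₀ (norm_nonneg _) (norm_nonneg _) two_ne_zero).1 ?_
    exact (lp.hasSum_norm_sq _).unique (hasSum_norm_sq_weightedComp hρ h)

end WeightedComposition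

theorem hasSum_norm_sq_fiber_of_weightedComp_norm_map {V W 𝕜 : Type*} [NormedField 𝕜]
    {Φ : V → W} {ρ : V → 𝕜} (T : lp (fun _ : W => 𝕜) 2 → lp (fun _ : V => 𝕜) 2)
    (hT : ∀ h v, T h v = ρ v * h (Φ v)) (hiso : ∀ h, ‖T h‖ = ‖h‖) (w : W) :
    HasSum (fun v : Φ ⁻¹' {w} => ‖ρ v‖ ^ 2) 1 := by
  classical
  have hTδ : ∀ v, ‖T (lp.single 2 w 1) v‖ ^ 2 = (Φ ⁻¹' {w}).indicator (‖ρ ·‖ ^ 2) v := by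
    intro v
    by_cases hv : Φ v = w <;> simp [hT, hv]
  have hsum := lp.hasSum_norm_sq (T (lp.single 2 w 1))
  rw [hiso, lp.norm_single (by norm_num), norm_one, one_pow, funext hTδ] at hsum
  exact hasSum_subtype_iff_indicator.2 hsum

/-- the formula `(T h)(v) = ρ(v) · h(Φ(v))` defines a bounded linear isometry
of `ℓ²(V)` iff `Φ` is surjective and `∑_{w ∈ Φ⁻¹(v)} |ρ(w)|² = 1` for every `v ∈ V`. -/
theorem stmt11 {V : Type*} (Φ : V → V) (ρ : V → ℂ) :
    (∃ T : lp (fun _ : V => ℂ) 2 →L[ℂ] lp (fun _ : V => ℂ) 2,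
        (∀ (h : lp (fun _ : V => ℂ) 2) (v : V), (T h : ∀ _ : V, ℂ) v = ρ v * h (Φ v)) ∧
        ∀ h : lp (fun _ : V => ℂ) 2, ‖T h‖ = ‖h‖) ↔
      (Function.Surjective Φ ∧
        ∀ v : V, HasSum (fun w : (Φ ⁻¹' {v} : Set V) => ‖ρ (w : V)‖ ^ 2) 1) := by
  constructor
  · rintro ⟨T, hT, hiso⟩
    have hρ := hasSum_norm_sq_fiber_of_weightedComp_norm_map T hT hiso
    refine ⟨fun w => ?_, hρ⟩
    obtain ⟨⟨v, hv⟩⟩ : Nonempty (Φ ⁻¹' {w}) :=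
      not_isEmpty_iff.1 fun _ => one_ne_zero ((hρ w).unique hasSum_empty)
    exact ⟨v, hv⟩
  · rintro ⟨-, hρ⟩
    let T := weightedCompₗᵢ (E := ℂ) Φ ρ hρ
    exact ⟨T.toContinuousLinearMap, fun _ _ => rfl, T.norm_map⟩
end

section
/- Let H be a complex Hilbert space, A a commutative unital C*-subalgebra of B(H), and T ∈ B(H) an isometry satisfying axiom (A1). For a ∈ A, let 𝓛 : A → A be the bounded linear operator 𝓛(b) = T*(a*a)bT (multiplication of the transfer map by |a|² = a*a). Then the spectral radius of the operator aT ∈ B(H) satisfies r(aT)² = r(𝓛), where r(𝓛) is the spectral radius of 𝓛 regarded as an element of the Banach algebra of bounded linear operators on the Banach space A. -/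
/-!
Commutativity of `A` lets `a` be moved past the elements of `A`, so `𝓛 b = (aT)* b (aT)` and hence
`𝓛ⁿ b = ((aT)ⁿ)* b (aT)ⁿ`. The C*-identity then gives `‖𝓛ⁿ‖ = ‖(aT)ⁿ‖²`, the norm being attained
at `b = 1`, and Gelfand's formula turns this into `r(𝓛) = r(aT)²`.
-/

open ContinuousLinearMap

theorem spectralRadius_pow_eq_of_nnnorm_pow_eq {E F : Type*} [NormedRing E] [NormedAlgebra ℂ E]
    [CompleteSpace E] [NormedRing F] [NormedAlgebra ℂ F] [CompleteSpace F] {x : E} {y : F} (k : ℕ)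
    (h : ∀ n : ℕ, ‖y ^ n‖₊ = ‖x ^ n‖₊ ^ k) :
    spectralRadius ℂ x ^ k = spectralRadius ℂ y := by
  have hx := ((ENNReal.continuous_pow k).tendsto _).comp
    (spectrum.pow_nnnorm_pow_one_div_tendsto_nhds_spectralRadius x)
  refine tendsto_nhds_unique (hx.congr fun n ↦ ?_)
    (spectrum.pow_nnnorm_pow_one_div_tendsto_nhds_spectralRadius y)
  simp only [Function.comp_apply, h n, ENNReal.coe_pow]
  rw [← ENNReal.rpow_natCast, ← ENNReal.rpow_natCast, ← ENNReal.rpow_mul, ← ENNReal.rpow_mul,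
    mul_comm]

theorem CStarRing.nnnorm_one_le {E : Type*} [NormedRing E] [StarRing E] [CStarRing E] :
    ‖(1 : E)‖₊ ≤ 1 := by
  have h : ‖(1 : E)‖₊ * ‖(1 : E)‖₊ = ‖(1 : E)‖₊ := by
    rw [← CStarRing.nnnorm_star_mul_self, star_one, mul_one]
  rcases eq_zero_or_pos ‖(1 : E)‖₊ with h₀ | h₀
  · simp [h₀]
  · exact ((mul_eq_left₀ h₀.ne').mp h).le

section StarConjugation

variable {E : Type*} [NormedRing E] [StarRing E] [NormedAlgebra ℂ E] [StarModule ℂ E]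
  {S : StarSubalgebra ℂ E} {L : S →L[ℂ] S} {w : E}

theorem pow_apply_eq_star_mul_mul (hL : ∀ b : S, (L b : E) = star w * b * w) (n : ℕ) (b : S) :
    ((L ^ n) b : E) = star (w ^ n) * b * w ^ n := by
  induction n generalizing b with
  | zero => simp
  | succ n ih =>
    rw [pow_succ', mul_apply_eq_comp, hL, ih, pow_succ, star_mul]
    simp only [mul_assoc]

theorem nnnorm_pow_eq_nnnorm_pow_sq [CStarRing E] (hL : ∀ b : S, (L b : E) = star w * b * w)
    (n : ℕ) :
    ‖L ^ n‖₊ = ‖w ^ n‖₊ ^ 2 := by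
  have hL₁ : ‖(L ^ n) 1‖₊ = ‖w ^ n‖₊ ^ 2 := by
    change ‖((L ^ n) 1 : E)‖₊ = _
    rw [pow_apply_eq_star_mul_mul hL, OneMemClass.coe_one, mul_one,
      CStarRing.nnnorm_star_mul_self, sq]
  refine le_antisymm (opNNNorm_le_bound _ _ fun b ↦ ?_) ?_
  · change ‖((L ^ n) b : E)‖₊ ≤ _ * ‖(b : E)‖₊
    rw [pow_apply_eq_star_mul_mul hL]
    calc ‖star (w ^ n) * b * w ^ n‖₊ ≤ ‖star (w ^ n)‖₊ * ‖(b : E)‖₊ * ‖w ^ n‖₊ :=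
          (nnnorm_mul_le _ _).trans (by gcongr; exact nnnorm_mul_le _ _)
      _ = ‖w ^ n‖₊ ^ 2 * ‖(b : E)‖₊ := by rw [nnnorm_star]; ring
  · calc ‖w ^ n‖₊ ^ 2 = ‖(L ^ n) 1‖₊ := hL₁.symm
      _ ≤ ‖L ^ n‖₊ * ‖(1 : S)‖₊ := le_opNNNorm _ _
      _ ≤ ‖L ^ n‖₊ := mul_le_of_le_one_right' (CStarRing.nnnorm_one_le (E := E))

end StarConjugation

theorem stmt12_general {H : Type*} [NormedAddCommGroup H] [InnerProductSpace ℂ H] [CompleteSpace H]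
    (A : StarSubalgebra ℂ (H →L[ℂ] H)) (hA : IsClosed (A : Set (H →L[ℂ] H)))
    (hcomm : ∀ a ∈ A, ∀ b ∈ A, a * b = b * a)
    (T : H →L[ℂ] H)
    (a : ↥A) (𝓛 : ↥A →L[ℂ] ↥A)
    (h𝓛 : ∀ b : ↥A, ((𝓛 b : ↥A) : H →L[ℂ] H) =
      adjoint T * (star (a : H →L[ℂ] H) * (a : H →L[ℂ] H)) * (b : H →L[ℂ] H) * T) :
    spectralRadius ℂ ((a : H →L[ℂ] H) * T) ^ 2 = spectralRadius ℂ 𝓛 := by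
  have : CompleteSpace A := hA.completeSpace_coe
  have h𝓛_conj : ∀ b : A, (𝓛 b : H →L[ℂ] H) = star ((a : H →L[ℂ] H) * T) * b * (a * T) := by
    intro b
    rw [h𝓛, star_mul, ← star_eq_adjoint]
    simp only [mul_assoc]
    rw [← mul_assoc _ (b : H →L[ℂ] H), hcomm _ a.2 _ b.2, mul_assoc]
  exact spectralRadius_pow_eq_of_nnnorm_pow_eq 2 (nnnorm_pow_eq_nnnorm_pow_sq h𝓛_conj)

/-- under axiom (A1), the spectral radius of the weighted shift `aT ∈ B(H)`
satisfies `r(aT)² = r(𝓛)`, where `𝓛 : A → A` is the bounded operator `𝓛(b) = T*(a*a)bT`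
on the Banach space `A`. -/
theorem stmt12 {H : Type*} [NormedAddCommGroup H] [InnerProductSpace ℂ H] [CompleteSpace H]
    (A : StarSubalgebra ℂ (H →L[ℂ] H)) (hA : IsClosed (A : Set (H →L[ℂ] H)))
    (hcomm : ∀ a ∈ A, ∀ b ∈ A, a * b = b * a)
    (T : H →L[ℂ] H) (hT : adjoint T * T = 1)
    (hA1 : ∀ a ∈ A, adjoint T * a * T ∈ A)
    (a : ↥A) (𝓛 : ↥A →L[ℂ] ↥A)
    (h𝓛 : ∀ b : ↥A, ((𝓛 b : ↥A) : H →L[ℂ] H) =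
      adjoint T * (star (a : H →L[ℂ] H) * (a : H →L[ℂ] H)) * (b : H →L[ℂ] H) * T) :
    spectralRadius ℂ ((a : H →L[ℂ] H) * T) ^ 2 = spectralRadius ℂ 𝓛 :=
  stmt12_general A hA hcomm T a 𝓛 h𝓛
end

section
/- Let (X,d) be a compact metric space and φ : X → X a local homeomorphism. Then there exists ε > 0 such that for every n ≥ 1, every x ∈ X, and all distinct points p, q ∈ φ⁻ⁿ(x), one has max_{0 ≤ i ≤ n} d(φⁱ(p), φⁱ(q)) ≥ ε. That is, every fiber φ⁻ⁿ(x) is ε-separated in the n-th Bowen metric dₙ(p,q) = max_{0 ≤ i ≤ n} d(φⁱ(p), φⁱ(q)). -/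
/-- for a local homeomorphism `φ` of a compact metric space there is `ε > 0`
such that each fiber `φ⁻ⁿ(x)` is `ε`-separated in the `n`-th Bowen metric
`dₙ(p,q) = max_{0 ≤ i ≤ n} d(φⁱ p, φⁱ q)`. -/
theorem stmt13 {X : Type*} [MetricSpace X] [CompactSpace X]
    (φ : X → X) (hφ : IsLocalHomeomorph φ) :
    ∃ ε > (0 : ℝ), ∀ n : ℕ, 1 ≤ n → ∀ x p q : X,
      φ^[n] p = x → φ^[n] q = x → p ≠ q →
        ∃ i ≤ n, ε ≤ dist (φ^[i] p) (φ^[i] q) := by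
  choose e hmem hfe using hφ
  obtain ⟨δ, hδ, hball⟩ := lebesgue_number_lemma_of_metric isCompact_univ
    (fun x => (e x).open_source) (fun x _ => Set.mem_iUnion.2 ⟨x, hmem x⟩)
  have key : ∀ p q : X, φ p = φ q → p ≠ q → δ ≤ dist p q := by
    intro p q hpq hne
    by_contra h
    push_neg at h
    obtain ⟨i, hi⟩ := hball p (Set.mem_univ p)
    have hp : p ∈ (e i).source := hi (Metric.mem_ball_self hδ)
    have hq : q ∈ (e i).source := hi (by simpa [Metric.mem_ball, dist_comm] using h)
    exact hne ((e i).injOn hp hq (by rw [← hfe i]; exact hpq))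
  refine ⟨δ, hδ, ?_⟩
  intro n hn
  induction n, hn using Nat.le_induction with
  | base =>
    intro x p q hp hq hne
    simp only [Function.iterate_one] at hp hq
    exact ⟨0, Nat.zero_le 1, by simpa using key p q (by rw [hp, hq]) hne⟩
  | succ n hn ih =>
    intro x p q hp hq hne
    by_cases h : φ^[n] p = φ^[n] q
    · obtain ⟨i, hi, hd⟩ := ih (φ^[n] p) p q rfl h.symm hne
      exact ⟨i, hi.trans (Nat.le_succ n), hd⟩
    · refine ⟨n, Nat.le_succ n, key _ _ ?_ h⟩
      rw [← Function.iterate_succ_apply' φ n p, ← Function.iterate_succ_apply' φ n q, hp, hq]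
end

section
/- Let (X,d) be a compact metric space, φ : X → X a surjective local homeomorphism, and c : X → [0,∞) a continuous function. Suppose 𝓛_c : C(X) → C(X) is a continuous linear operator satisfying (𝓛_c f)(y) = ∑_{x ∈ φ⁻¹(y)} c(x)·f(x) for all f ∈ C(X) and y ∈ X. Then the spectral radius of 𝓛_c equals lim_{n→∞} ( max_{y ∈ X} ∑_{x ∈ φ⁻ⁿ(y)} ∏_{i=0}^{n-1} c(φⁱ(x)) )^{1/n}. -/
open scoped ComplexOrder
open Filter

lemma locHomeo_fiber_finite {X : Type*} [TopologicalSpace X] [CompactSpace X] [T1Space X]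
    {f : X → X} (hf : IsLocalHomeomorph f) (y : X) : (f ⁻¹' {y}).Finite := by
  set K : Set X := f ⁻¹' {y} with hKdef
  have hK : IsCompact K := (isClosed_singleton.preimage hf.continuous).isCompact
  have hU : ∀ x : X, ∃ U : Set X, IsOpen U ∧ x ∈ U ∧ Set.InjOn f U := by
    intro x
    obtain ⟨e, hx, hfe⟩ := hf x
    exact ⟨e.source, e.open_source, hx, hfe ▸ e.injOn⟩
  choose U hUo hxU hUinj using hU
  obtain ⟨t, htK, htfin, hcover⟩ := hK.elim_finite_subcover_image
    (fun x (_ : x ∈ K) ↦ hUo x) (fun z hz ↦ Set.mem_biUnion hz (hxU z))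
  refine htfin.subset fun z hz ↦ ?_
  obtain ⟨x, hxt, hzU⟩ := Set.mem_iUnion₂.mp (hcover hz)
  have hfz : f z = f x := by
    have hx : x ∈ K := htK hxt
    simp only [hKdef, Set.mem_preimage, Set.mem_singleton_iff] at hz hx
    rw [hz, hx]
  exact (hUinj x hzU (hxU x) hfz) ▸ hxt

lemma isLocalHomeomorph_iterate {X : Type*} [TopologicalSpace X]
    {f : X → X} (hf : IsLocalHomeomorph f) (n : ℕ) : IsLocalHomeomorph f^[n] := by
  induction n with
  | zero =>
    rw [Function.iterate_zero]
    exact (Homeomorph.refl X).isLocalHomeomorph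
  | succ n ih =>
    rw [Function.iterate_succ]
    exact ih.comp hf

/-- for a surjective local homeomorphism `φ` of a compact metric space and a
continuous weight `c ≥ 0`, the spectral radius of the Ruelle–Perron–Frobenius operator
`(𝓛_c f)(y) = ∑_{φ(x)=y} c(x) f(x)` on `C(X)` equals
`lim_n (max_y ∑_{φⁿ(x)=y} ∏_{i<n} c(φⁱ x))^{1/n}`. -/
theorem stmt14 {X : Type*} [MetricSpace X] [CompactSpace X] [Nonempty X]
    (φ : X → X) (hφ : IsLocalHomeomorph φ) (hsurj : Function.Surjective φ)
    (c : C(X, ℝ)) (hc : ∀ x, 0 ≤ c x)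
    (𝓛c : C(X, ℂ) →L[ℂ] C(X, ℂ))
    (h𝓛c : ∀ (f : C(X, ℂ)) (y : X),
      (𝓛c f) y = ∑ᶠ x ∈ φ ⁻¹' {y}, (c x : ℂ) * f x) :
    Filter.Tendsto
      (fun n : ℕ =>
        (⨆ y : X, ∑ᶠ x ∈ φ^[n] ⁻¹' {y}, ∏ i ∈ Finset.range n, c (φ^[i] x)) ^ ((1 : ℝ) / n))
      Filter.atTop (nhds ((spectralRadius ℂ 𝓛c).toReal)) := by
  classical
  have hfin : ∀ (n : ℕ) (y : X), (φ^[n] ⁻¹' {y}).Finite :=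
    fun n y => locHomeo_fiber_finite (isLocalHomeomorph_iterate hφ n) y
  set Fib : ℕ → X → Finset X := fun n y => (hfin n y).toFinset with hFib
  have hmemFib : ∀ n y z, z ∈ Fib n y ↔ φ^[n] z = y := by
    intro n y z
    simp [hFib, Set.Finite.mem_toFinset]
  -- rewrite the defining formula with finite sums
  have h1 : ∀ (f : C(X, ℂ)) (y : X), (𝓛c f) y = ∑ x ∈ Fib 1 y, (c x : ℂ) * f x := by
    intro f y
    rw [h𝓛c f y]
    have hset : φ ⁻¹' {y} = ↑(Fib 1 y) := by
      rw [hFib]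
      rw [Set.Finite.coe_toFinset, Function.iterate_one]
    rw [hset, finsum_mem_coe_finset]
  -- the key formula for iterates
  have key : ∀ (n : ℕ) (f : C(X, ℂ)) (y : X),
      ((𝓛c ^ n) f) y = ∑ x ∈ Fib n y, ((∏ i ∈ Finset.range n, c (φ^[i] x) : ℝ) : ℂ) * f x := by
    intro n
    induction n with
    | zero =>
      intro f y
      have hFib0 : Fib 0 y = {y} := by
        ext z
        simp [hmemFib]
      simp [hFib0]
    | succ n ih =>
      intro f y
      rw [pow_succ, ContinuousLinearMap.mul_apply, ih (𝓛c f) y]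
      have hdecomp : Fib (n + 1) y = (Fib n y).biUnion (fun x => Fib 1 x) := by
        ext z
        simp only [hmemFib, Finset.mem_biUnion]
        constructor
        · intro h
          exact ⟨φ z, by rw [← Function.iterate_succ_apply]; exact h,
            by rw [Function.iterate_one]⟩
        · rintro ⟨x, hx, hz⟩
          rw [Function.iterate_one] at hz
          rw [Function.iterate_succ_apply, hz]
          exact hx
      have hdisj : Set.PairwiseDisjoint ↑(Fib n y) (fun x => Fib 1 x) := by
        intro a _ b _ hab
        refine Finset.disjoint_left.mpr fun z hza hzb => hab ?_
        rw [hmemFib, Function.iterate_one] at hza hzb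
        rw [← hza, ← hzb]
      rw [hdecomp, Finset.sum_biUnion hdisj]
      refine Finset.sum_congr rfl fun x hx => ?_
      rw [h1 f x, Finset.mul_sum]
      refine Finset.sum_congr rfl fun z hz => ?_
      rw [hmemFib, Function.iterate_one] at hz
      have hw : (∏ i ∈ Finset.range (n + 1), c (φ^[i] z))
          = (∏ i ∈ Finset.range n, c (φ^[i] x)) * c z := by
        rw [Finset.prod_range_succ']
        congr 1
        refine Finset.prod_congr rfl fun i _ => ?_
        rw [Function.iterate_succ_apply, hz]
      rw [hw]
      push_cast
      ring
  -- the sup in the statement equals the norm of `(𝓛c ^ n) 1`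
  have hSn : ∀ n : ℕ,
      (⨆ y : X, ∑ᶠ x ∈ φ^[n] ⁻¹' {y}, ∏ i ∈ Finset.range n, c (φ^[i] x))
        = ‖(𝓛c ^ n) (1 : C(X, ℂ))‖ := by
    intro n
    rw [ContinuousMap.norm_eq_iSup_norm]
    refine iSup_congr fun y => ?_
    have h1v : ((𝓛c ^ n) (1 : C(X, ℂ))) y
        = ((∑ x ∈ Fib n y, ∏ i ∈ Finset.range n, c (φ^[i] x) : ℝ) : ℂ) := by
      rw [key n 1 y]
      push_cast
      simp
    rw [h1v, Complex.norm_real, Real.norm_eq_abs,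
      abs_of_nonneg (Finset.sum_nonneg fun x _ => Finset.prod_nonneg fun i _ => hc _)]
    rw [← Set.Finite.coe_toFinset (hfin n y), finsum_mem_coe_finset]
  haveI : Nontrivial C(X, ℂ) :=
    ⟨0, 1, fun h => by
      simpa using ContinuousMap.congr_fun h (Classical.arbitrary X)⟩
  -- operator norm equals norm of image of 1
  have hnorm : ∀ n : ℕ, ‖𝓛c ^ n‖ = ‖(𝓛c ^ n) (1 : C(X, ℂ))‖ := by
    intro n
    refine le_antisymm ?_ ?_
    · refine ContinuousLinearMap.opNorm_le_bound _ (norm_nonneg _) fun f => ?_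
      refine ContinuousMap.norm_le _ (mul_nonneg (norm_nonneg _) (norm_nonneg _)) |>.mpr
        fun y => ?_
      rw [key n f y]
      calc ‖∑ x ∈ Fib n y, ((∏ i ∈ Finset.range n, c (φ^[i] x) : ℝ) : ℂ) * f x‖
          ≤ ∑ x ∈ Fib n y, ‖((∏ i ∈ Finset.range n, c (φ^[i] x) : ℝ) : ℂ) * f x‖ :=
            norm_sum_le _ _
        _ ≤ ∑ x ∈ Fib n y, (∏ i ∈ Finset.range n, c (φ^[i] x)) * ‖f‖ := by
            refine Finset.sum_le_sum fun x _ => ?_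
            rw [norm_mul, Complex.norm_real, Real.norm_eq_abs,
              abs_of_nonneg (Finset.prod_nonneg fun i _ => hc _)]
            exact mul_le_mul_of_nonneg_left (f.norm_coe_le_norm x)
              (Finset.prod_nonneg fun i _ => hc _)
        _ = (∑ x ∈ Fib n y, ∏ i ∈ Finset.range n, c (φ^[i] x)) * ‖f‖ := by
            rw [Finset.sum_mul]
        _ ≤ ‖(𝓛c ^ n) (1 : C(X, ℂ))‖ * ‖f‖ := by
            refine mul_le_mul_of_nonneg_right ?_ (norm_nonneg f)
            have h1v : ((𝓛c ^ n) (1 : C(X, ℂ))) y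
                = ((∑ x ∈ Fib n y, ∏ i ∈ Finset.range n, c (φ^[i] x) : ℝ) : ℂ) := by
              rw [key n 1 y]; push_cast; simp
            calc (∑ x ∈ Fib n y, ∏ i ∈ Finset.range n, c (φ^[i] x))
                ≤ ‖((𝓛c ^ n) (1 : C(X, ℂ))) y‖ := by
                  rw [h1v, Complex.norm_real, Real.norm_eq_abs]
                  exact le_abs_self _
              _ ≤ ‖(𝓛c ^ n) (1 : C(X, ℂ))‖ := ContinuousMap.norm_coe_le_norm _ y
    · calc ‖(𝓛c ^ n) (1 : C(X, ℂ))‖ ≤ ‖𝓛c ^ n‖ * ‖(1 : C(X, ℂ))‖ :=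
          ContinuousLinearMap.le_opNorm _ _
        _ = ‖𝓛c ^ n‖ := by rw [norm_one, mul_one]
  -- Gelfand's formula
  have hgel := spectrum.pow_nnnorm_pow_one_div_tendsto_nhds_spectralRadius 𝓛c
  have hne : spectralRadius ℂ 𝓛c ≠ ⊤ :=
    ne_top_of_le_ne_top ENNReal.coe_ne_top (spectrum.spectralRadius_le_nnnorm (𝕜 := ℂ) 𝓛c)
  have hreal := (ENNReal.tendsto_toReal hne).comp hgel
  refine hreal.congr fun n => ?_
  show (((‖𝓛c ^ n‖₊ : ENNReal) ^ ((1 : ℝ) / n)).toReal) = _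
  rw [← ENNReal.toReal_rpow]
  simp only [ENNReal.coe_toReal, coe_nnnorm]
  rw [hnorm n, ← hSn n]
end

section
/- Let H be a complex Hilbert space, A a commutative unital C*-subalgebra of B(H), and T ∈ B(H) an isometry satisfying (A1) and (A2), with L(a) = T*aT and α the endomorphism from (A2). Then for all n, m, k, l ∈ ℕ and all a, b, c, d ∈ A (viewed as operators in B(H)): if m ≥ k, then (a∘Tⁿ∘(T*)ᵐ∘b)·(c∘Tᵏ∘(T*)ˡ∘d) = a∘Tⁿ∘(T*)^{m−k+l}∘αˡ(Lᵏ(bc))∘d, and if m < k, then (a∘Tⁿ∘(T*)ᵐ∘b)·(c∘Tᵏ∘(T*)ˡ∘d) = a∘αⁿ(Lᵐ(bc))∘T^{k−m+n}∘(T*)ˡ∘d, where α⁰ and L⁰ denote the identity map of A. -/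
open ContinuousLinearMap

set_option maxHeartbeats 1000000

/-- the commutation relations in `C*(A,T)`: for `n,m,k,l ∈ ℕ` and
`a,b,c,d ∈ A`, `(aTⁿT*ᵐb)(cTᵏT*ˡd)` equals `aTⁿT*^{m−k+l} αˡ(Lᵏ(bc)) d` if `m ≥ k`, and
`a αⁿ(Lᵐ(bc)) T^{k−m+n} T*ˡ d` if `m < k`. -/
theorem stmt16 {H : Type*} [NormedAddCommGroup H] [InnerProductSpace ℂ H] [CompleteSpace H]
    (A : StarSubalgebra ℂ (H →L[ℂ] H)) (hA : IsClosed (A : Set (H →L[ℂ] H)))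
    (hcomm : ∀ a ∈ A, ∀ b ∈ A, a * b = b * a)
    (T : H →L[ℂ] H) (hT : adjoint T * T = 1)
    (hA1 : ∀ a ∈ A, adjoint T * a * T ∈ A)
    (α : ↥A →⋆ₐ[ℂ] ↥A)
    (hα : ∀ a : ↥A, T * (a : H →L[ℂ] H) = (α a : H →L[ℂ] H) * T)
    (L : ↥A → ↥A)
    (hL : ∀ a : ↥A, ((L a : ↥A) : H →L[ℂ] H) = adjoint T * (a : H →L[ℂ] H) * T) :
    ∀ (n m k l : ℕ) (a b c d : ↥A),
      (m ≥ k →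
        ((a : H →L[ℂ] H) * T ^ n * (adjoint T) ^ m * (b : H →L[ℂ] H)) *
            ((c : H →L[ℂ] H) * T ^ k * (adjoint T) ^ l * (d : H →L[ℂ] H)) =
          (a : H →L[ℂ] H) * T ^ n * (adjoint T) ^ (m - k + l) *
            (((⇑α)^[l] (L^[k] (b * c)) : ↥A) : H →L[ℂ] H) * (d : H →L[ℂ] H)) ∧
      (m < k →
        ((a : H →L[ℂ] H) * T ^ n * (adjoint T) ^ m * (b : H →L[ℂ] H)) *
            ((c : H →L[ℂ] H) * T ^ k * (adjoint T) ^ l * (d : H →L[ℂ] H)) =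
          (a : H →L[ℂ] H) * (((⇑α)^[n] (L^[m] (b * c)) : ↥A) : H →L[ℂ] H) *
            T ^ (k - m + n) * (adjoint T) ^ l * (d : H →L[ℂ] H)) := by
  -- e * T* = T* * α e
  have hstar : ∀ e : ↥A, (e : H →L[ℂ] H) * adjoint T = adjoint T * (α e : H →L[ℂ] H) := by
    intro e
    have h := congrArg star (hα (star e))
    simpa [star_mul, star_eq_adjoint, map_star] using h
  -- T^j * e = α^[j] e * T^j
  have hpow1 : ∀ (j : ℕ) (e : ↥A),
      T ^ j * (e : H →L[ℂ] H) = (((⇑α)^[j] e : ↥A) : H →L[ℂ] H) * T ^ j := by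
    intro j
    induction j with
    | zero => intro e; simp
    | succ j ih =>
        intro e
        rw [pow_succ, mul_assoc, hα e, ← mul_assoc, ih (α e), mul_assoc, ← pow_succ,
          Function.iterate_succ_apply]
  -- e * (T*)^j = (T*)^j * α^[j] e
  have hpow2 : ∀ (j : ℕ) (e : ↥A),
      (e : H →L[ℂ] H) * (adjoint T) ^ j
        = (adjoint T) ^ j * (((⇑α)^[j] e : ↥A) : H →L[ℂ] H) := by
    intro j
    induction j with
    | zero => intro e; simp
    | succ j ih =>
        intro e
        rw [pow_succ', ← mul_assoc, hstar e, mul_assoc, ih (α e), ← mul_assoc, ← pow_succ',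
          Function.iterate_succ_apply]
  -- (T*)^j * e * T^j = L^[j] e
  have hpow3 : ∀ (j : ℕ) (e : ↥A),
      (adjoint T) ^ j * (e : H →L[ℂ] H) * T ^ j = ((L^[j] e : ↥A) : H →L[ℂ] H) := by
    intro j
    induction j with
    | zero => intro e; simp
    | succ j ih =>
        intro e
        rw [Function.iterate_succ_apply', hL, ← ih e, pow_succ' (adjoint T), pow_succ T]
        simp only [mul_assoc]
  intro n m k l a b c d
  constructor
  · intro hmk
    have key : (adjoint T) ^ m * ((b : H →L[ℂ] H) * (c : H →L[ℂ] H)) * T ^ k * (adjoint T) ^ l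
        = (adjoint T) ^ (m - k + l) * (((⇑α)^[l] (L^[k] (b * c)) : ↥A) : H →L[ℂ] H) := by
      have hm : (adjoint T) ^ m = (adjoint T) ^ (m - k) * (adjoint T) ^ k := by
        rw [← pow_add, Nat.sub_add_cancel hmk]
      have hbc : ((b : H →L[ℂ] H) * (c : H →L[ℂ] H)) = ((b * c : ↥A) : H →L[ℂ] H) := by
        simp
      rw [hbc, hm, mul_assoc ((adjoint T) ^ (m - k)), mul_assoc ((adjoint T) ^ (m - k)),
        hpow3 k (b * c), mul_assoc, hpow2 l, ← mul_assoc,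
        ← pow_add]
    calc ((a : H →L[ℂ] H) * T ^ n * (adjoint T) ^ m * (b : H →L[ℂ] H)) *
            ((c : H →L[ℂ] H) * T ^ k * (adjoint T) ^ l * (d : H →L[ℂ] H))
        = (a : H →L[ℂ] H) * T ^ n *
            ((adjoint T) ^ m * ((b : H →L[ℂ] H) * (c : H →L[ℂ] H)) * T ^ k * (adjoint T) ^ l)
            * (d : H →L[ℂ] H) := by
          simp only [mul_assoc]
      _ = _ := by rw [key]; simp only [mul_assoc]
  · intro hmk
    have hbc : ((b : H →L[ℂ] H) * (c : H →L[ℂ] H)) = ((b * c : ↥A) : H →L[ℂ] H) := by simp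
    have hk : T ^ k = T ^ m * T ^ (k - m) := by
      rw [← pow_add, Nat.add_sub_cancel' hmk.le]
    have key : T ^ n * ((adjoint T) ^ m * ((b : H →L[ℂ] H) * (c : H →L[ℂ] H)) * T ^ k)
        = (((⇑α)^[n] (L^[m] (b * c)) : ↥A) : H →L[ℂ] H) * T ^ (k - m + n) := by
      rw [hbc, hk, ← mul_assoc ((adjoint T) ^ m * ((b * c : ↥A) : H →L[ℂ] H)),
        hpow3 m (b * c), ← mul_assoc, hpow1 n, mul_assoc, ← pow_add,
        Nat.add_comm n (k - m)]
    calc ((a : H →L[ℂ] H) * T ^ n * (adjoint T) ^ m * (b : H →L[ℂ] H)) *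
            ((c : H →L[ℂ] H) * T ^ k * (adjoint T) ^ l * (d : H →L[ℂ] H))
        = (a : H →L[ℂ] H) *
            (T ^ n * ((adjoint T) ^ m * ((b : H →L[ℂ] H) * (c : H →L[ℂ] H)) * T ^ k))
            * (adjoint T) ^ l * (d : H →L[ℂ] H) := by
          simp only [mul_assoc]
      _ = _ := by rw [key]; simp only [mul_assoc]
end

section
/- Let (X,d) be a compact metric space and φ : X → X a continuous expanding map. Then the set of periodic points Per(φ) = {x ∈ X : φⁿ(x) = x for some n ≥ 1} has empty interior (i.e., φ is topologically free) if and only if no isolated point of X is periodic. -/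
/-!
If `x` is an interior point of the fixed-point set of `φ^[n]`, then for `y` close enough to `x`
the orbits of `x` and `y` stay `ε`-close for `n` steps, so their distance is multiplied by at
least `θ ^ n > 1`; since both points come back after `n` steps, `y = x`. Hence interior points of
`Fix(φ^[n])` are isolated, and if no isolated point is periodic, every `Fix(φ^[n])` is a closed
set with empty interior. The set of periodic points is their countable union, hence meagre, and
by Baire's theorem in the compact metric space `X` it has empty interior.
-/

open Function Set Filter Topology

theorem IsMeagre.interior_eq_empty {X : Type*} [TopologicalSpace X] [BaireSpace X] {s : Set X}
    (hs : IsMeagre s) : interior s = ∅ := by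
  by_contra hne
  exact not_isMeagre_of_isOpen isOpen_interior (nonempty_iff_ne_empty.mpr hne)
    (hs.mono interior_subset)

section Expanding

variable {X : Type*} [MetricSpace X] {φ : X → X} {ε θ : ℝ}

theorem pow_mul_dist_le_dist_iterate (hθ : 0 ≤ θ)
    (hexp : ∀ x y : X, dist x y < ε → θ * dist x y ≤ dist (φ x) (φ y)) {x y : X} {n : ℕ}
    (hclose : ∀ j < n, dist (φ^[j] x) (φ^[j] y) < ε) :
    θ ^ n * dist x y ≤ dist (φ^[n] x) (φ^[n] y) := by
  induction n with
  | zero => simp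
  | succ k ih =>
    calc θ ^ (k + 1) * dist x y = θ * (θ ^ k * dist x y) := by ring
      _ ≤ θ * dist (φ^[k] x) (φ^[k] y) :=
          mul_le_mul_of_nonneg_left (ih fun j hj => hclose j (by omega)) hθ
      _ ≤ dist (φ (φ^[k] x)) (φ (φ^[k] y)) := hexp _ _ (hclose k k.lt_succ_self)
      _ = dist (φ^[k + 1] x) (φ^[k + 1] y) := by
          rw [iterate_succ_apply', iterate_succ_apply']

theorem isOpen_singleton_of_mem_interior_ptsOfPeriod (hcont : Continuous φ) (hε : 0 < ε)
    (hθ : 1 < θ) (hexp : ∀ x y : X, dist x y < ε → θ * dist x y ≤ dist (φ x) (φ y))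
    {n : ℕ} (hn : 0 < n) {x : X} (hx : x ∈ interior (ptsOfPeriod φ n)) :
    IsOpen ({x} : Set X) := by
  have hclose : ∀ᶠ y in 𝓝 x, ∀ j ∈ Iio n, dist (φ^[j] y) (φ^[j] x) < ε :=
    (eventually_all_finite (finite_Iio n)).mpr fun j _ =>
      Metric.tendsto_nhds.mp ((hcont.iterate j).tendsto x) ε hε
  obtain ⟨δ, hδ, hball⟩ :=
    Metric.eventually_nhds_iff.mp (Eventually.and (mem_interior_iff_mem_nhds.mp hx) hclose)
  refine Metric.isOpen_singleton_iff.mpr ⟨δ, hδ, fun y hy => ?_⟩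
  obtain ⟨hyn, hyclose⟩ := hball hy
  have hexpand := pow_mul_dist_le_dist_iterate (by linarith) hexp hyclose
  have hxn : IsPeriodicPt φ n x := interior_subset (s := ptsOfPeriod φ n) hx
  rw [hyn.eq, hxn.eq] at hexpand
  have : 1 < θ ^ n := one_lt_pow₀ hθ hn.ne'
  exact dist_le_zero.mp (by nlinarith [dist_nonneg (x := y) (y := x)])

theorem interior_periodicPts_eq_empty_iff [CompactSpace X] (hcont : Continuous φ)
    (hε : 0 < ε) (hθ : 1 < θ)
    (hexp : ∀ x y : X, dist x y < ε → θ * dist x y ≤ dist (φ x) (φ y)) :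
    interior (periodicPts φ) = ∅ ↔
      ∀ x : X, IsOpen ({x} : Set X) → x ∉ periodicPts φ := by
  constructor
  · intro h x hx hper
    have hint : x ∈ interior (periodicPts φ) :=
      interior_mono (singleton_subset_iff.mpr hper) (by rw [hx.interior_eq]; rfl)
    rwa [h] at hint
  · intro hiso
    have hnowhere (n : ℕ+) : IsNowhereDense (ptsOfPeriod φ n) :=
      (isClosed_fixedPoints (hcont.iterate n)).isNowhereDense_iff.mpr <|
        eq_empty_iff_forall_notMem.mpr fun x hx =>
          hiso x (isOpen_singleton_of_mem_interior_ptsOfPeriod hcont hε hθ hexp n.pos hx)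
            (mk_mem_periodicPts n.pos (interior_subset (s := ptsOfPeriod φ n) hx))
    rw [← iUnion_pnat_ptsOfPeriod]
    exact (isMeagre_iUnion fun n => (hnowhere n).isMeagre).interior_eq_empty

end Expanding

/-- an expanding map of a compact metric space is topologically free (its set
of periodic points has empty interior) iff no isolated point of `X` is periodic. -/
theorem stmt18 {X : Type*} [MetricSpace X] [CompactSpace X]
    (φ : X → X) (hcont : Continuous φ)
    (hexp : ∃ ε > (0 : ℝ), ∃ θ > (1 : ℝ),
      ∀ x y : X, dist x y < ε → θ * dist x y ≤ dist (φ x) (φ y)) :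
    interior {x : X | ∃ n : ℕ, 1 ≤ n ∧ φ^[n] x = x} = ∅ ↔
      ∀ x : X, IsOpen ({x} : Set X) → ∀ n : ℕ, 1 ≤ n → φ^[n] x ≠ x := by
  obtain ⟨ε, hε, θ, hθ, hexp⟩ := hexp
  exact (interior_periodicPts_eq_empty_iff hcont hε hθ hexp).trans <| by
    simp only [mem_periodicPts, not_exists, not_and]
    rfl
end
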